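/- arXiv:1904.11029 — 6 statements merged into one kernel-verified Lean document; each statement's English description precedes it below -/
import Mathlib

section
/- (Proposition 6.5) For any nonnegative reals a_1,…,a_d, the weight polytope of a_1λ_1 + ⋯ + a_dλ_d equals the Minkowski sum of the scaled fundamental weight polytopes: conv({w·(a_1λ_1 + ⋯ + a_dλ_d) : w ∈ W}) = a_1·conv({w·λ_1 : w ∈ W}) + ⋯ + a_d·conv({w·λ_d : w ∈ W}). -/
open scoped RealInnerProductSpace Pointwise

section Defs

variable {V : Type*} [NormedAddCommGroup V] [InnerProductSpace ℝ V]

/-- The reflection `s_α(x) = x - (2⟨x,α⟩/⟨α,α⟩) α`. -/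
noncomputable def reflFormula (α x : V) : V :=
  x - ((2 * ⟪x, α⟫) / ⟪α, α⟫) • α

/-- `g` is the reflection across the hyperplane orthogonal to `α`. -/
def IsReflection (g : V ≃ₗ[ℝ] V) (α : V) : Prop :=
  ∀ x, g x = reflFormula α x

/-- A finite root system in `V`: a finite spanning set of nonzero vectors, whose only scalar
multiples in `Φ` are `±α`, stable under each reflection `s_α`. -/
structure IsRootSystem (Φ : Set V) : Prop where
  finite : Φ.Finite
  spans : Submodule.span ℝ Φ = ⊤
  ne_zero : ∀ α ∈ Φ, α ≠ 0
  smul_mem : ∀ α ∈ Φ, ∀ c : ℝ, c • α ∈ Φ → c = 1 ∨ c = -1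
  refl_maps : ∀ α ∈ Φ, reflFormula α '' Φ = Φ

/-- The Weyl group of `Φ`: the subgroup of `GL(V)` generated by the reflections `s_α`, `α ∈ Φ`. -/
noncomputable def weylGroup (Φ : Set V) : Subgroup (V ≃ₗ[ℝ] V) :=
  Subgroup.closure {g | ∃ α ∈ Φ, IsReflection g α}

/-- `a 0, …, a (d-1)` is a system of simple roots of `Φ`: a basis of `V` contained in `Φ` such
that every root is a combination of the `a i` with all coefficients `≥ 0` or all `≤ 0`. -/
structure IsSimpleSystem (Φ : Set V) {d : ℕ} (a : Fin d → V) : Prop where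
  mem : ∀ i, a i ∈ Φ
  indep : LinearIndependent ℝ a
  spans : Submodule.span ℝ (Set.range a) = ⊤
  sign : ∀ β ∈ Φ, ∃ c : Fin d → ℝ,
    ((∀ i, 0 ≤ c i) ∨ (∀ i, c i ≤ 0)) ∧ β = ∑ i, c i • a i

/-- The coroot `α^∨ = 2α/⟨α,α⟩`. -/
noncomputable def coroot (α : V) : V := (2 / ⟪α, α⟫) • α

/-- Cartan matrix entry `A_{ij} = ⟨α_i^∨, α_j⟩`. -/
noncomputable def cartan {d : ℕ} (a : Fin d → V) (i j : Fin d) : ℝ :=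
  ⟪coroot (a i), a j⟫

/-- `N(i) = {j ≠ i : ⟨α_i, α_j⟩ ≠ 0}`, the neighbours of `i` in the Dynkin diagram. -/
noncomputable def Nset {d : ℕ} (a : Fin d → V) (i : Fin d) : Finset (Fin d) :=
  Finset.univ.filter fun j => j ≠ i ∧ ⟪a i, a j⟫ ≠ 0

/-- The set `R = W{λ_1, …, λ_d}` of the conjugates of the fundamental weights. -/
def weightConjugates (Φ : Set V) {d : ℕ} (lam : Fin d → V) : Set V :=
  {x | ∃ w ∈ weylGroup Φ, ∃ i, x = w (lam i)}

/-- `h` satisfies the local Φ-submodular inequalities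
`h(wλ_i) + h(w s_i λ_i) ≥ Σ_{j ∈ N(i)} (−A_{ji}) h(wλ_j)`. -/
noncomputable def SatisfiesLocal (Φ : Set V) {d : ℕ} (a lam : Fin d → V) (h : V → ℝ) : Prop :=
  ∀ w ∈ weylGroup Φ, ∀ i : Fin d,
    h (w (lam i)) + h (w (reflFormula (a i) (lam i))) ≥
      ∑ j ∈ Nset a i, (-(cartan a j i)) * h (w (lam j))

/-- `F` is a face of `P`: the set of points of `P` maximizing `⟨u, ·⟩` for some `u ∈ V`. -/
def IsFaceOf (P F : Set V) : Prop :=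
  ∃ u : V, F = {v ∈ P | ∀ x ∈ P, ⟪u, x⟫ ≤ ⟪u, v⟫}

end Defs

/-- A polytope: the convex hull of a nonempty finite subset. -/
def IsPolytope {V : Type*} [AddCommGroup V] [Module ℝ V] (P : Set V) : Prop :=
  ∃ S : Finset V, S.Nonempty ∧ P = convexHull ℝ (S : Set V)


namespace WP65

variable {V : Type*} [NormedAddCommGroup V] [InnerProductSpace ℝ V]

lemma reflFormula_add (α x y : V) :
    reflFormula α (x + y) = reflFormula α x + reflFormula α y := by
  simp only [reflFormula, inner_add_left]
  rw [show (2 * (⟪x, α⟫ + ⟪y, α⟫)) / ⟪α, α⟫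
      = 2*⟪x,α⟫/⟪α,α⟫ + 2*⟪y,α⟫/⟪α,α⟫ by ring, add_smul]
  abel

lemma reflFormula_smul (α : V) (c : ℝ) (x : V) :
    reflFormula α (c • x) = c • reflFormula α x := by
  simp only [reflFormula, real_inner_smul_left, smul_sub, smul_smul]
  rw [show 2 * (c * ⟪x,α⟫) / ⟪α,α⟫ = c * (2*⟪x,α⟫/⟪α,α⟫) by ring]

lemma reflFormula_invol (α : V) : Function.Involutive (reflFormula α) := by
  intro x
  by_cases hA : ⟪α, α⟫ = (0:ℝ)
  · have h0 : α = 0 := inner_self_eq_zero.mp hA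
    simp [reflFormula, h0]
  · simp only [reflFormula, inner_sub_left, real_inner_smul_left]
    have h : (2 * (⟪x, α⟫ - 2 * ⟪x, α⟫ / ⟪α, α⟫ * ⟪α, α⟫)) / ⟪α, α⟫
        = -(2 * ⟪x, α⟫ / ⟪α, α⟫) := by field_simp; ring
    rw [h, neg_smul]
    abel

noncomputable def sRefl (α : V) : V ≃ₗ[ℝ] V :=
  { toFun := reflFormula α
    map_add' := reflFormula_add α
    map_smul' := reflFormula_smul α
    invFun := reflFormula α
    left_inv := reflFormula_invol α
    right_inv := reflFormula_invol α }

@[simp] lemma sRefl_apply (α x : V) : sRefl α x = reflFormula α x := rfl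

@[simp] lemma sRefl_inv (α : V) : (sRefl α)⁻¹ = sRefl α := by
  ext x; rfl

lemma sRefl_sq (α : V) : sRefl α * sRefl α = 1 := by
  ext x; exact reflFormula_invol α x

lemma sRefl_root (α : V) (hα : α ≠ 0) : sRefl α α = -α := by
  have hA : ⟪α, α⟫ ≠ (0:ℝ) := inner_self_ne_zero.mpr hα
  simp only [sRefl_apply, reflFormula]
  rw [show (2 * ⟪α, α⟫) / ⟪α, α⟫ = 2 by field_simp]
  rw [two_smul]; abel

lemma sRefl_mem {Φ : Set V} {α : V} (hα : α ∈ Φ) : sRefl α ∈ weylGroup Φ :=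
  Subgroup.subset_closure ⟨α, hα, fun _ => rfl⟩

lemma sRefl_isometry {α : V} (hα : α ≠ 0) (x y : V) :
    ⟪reflFormula α x, reflFormula α y⟫ = ⟪x, y⟫ := by
  have hA : ⟪α, α⟫ ≠ (0:ℝ) := inner_self_ne_zero.mpr hα
  simp only [reflFormula, inner_sub_left, inner_sub_right, real_inner_smul_left,
    real_inner_smul_right]
  rw [real_inner_comm α x, real_inner_comm α y]
  field_simp
  ring

lemma weyl_props {Φ : Set V} (hΦ : IsRootSystem Φ) {w : V ≃ₗ[ℝ] V} (hw : w ∈ weylGroup Φ) :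
    (∀ x y, ⟪w x, w y⟫ = ⟪x, y⟫) ∧ (∀ β ∈ Φ, w β ∈ Φ) ∧ (∀ β ∈ Φ, w⁻¹ β ∈ Φ) := by
  induction hw using Subgroup.closure_induction with
  | mem g hg =>
    obtain ⟨α, hα, hr⟩ := hg
    have hg1 : ∀ x, g x = reflFormula α x := hr
    have hginv : ∀ x, (g⁻¹ : V ≃ₗ[ℝ] V) x = reflFormula α x := by
      intro x
      have : g (reflFormula α x) = x := by
        rw [hg1]; exact reflFormula_invol α x
      calc (g⁻¹ : V ≃ₗ[ℝ] V) x = g.symm x := rfl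
        _ = reflFormula α x := by
          conv_lhs => rw [← this]
          exact g.symm_apply_apply _
    refine ⟨fun x y => by rw [hg1, hg1]; exact sRefl_isometry (hΦ.ne_zero α hα) x y,
      fun β hβ => ?_, fun β hβ => ?_⟩
    · rw [hg1, ← hΦ.refl_maps α hα]; exact ⟨β, hβ, rfl⟩
    · rw [hginv, ← hΦ.refl_maps α hα]; exact ⟨β, hβ, rfl⟩
  | one => exact ⟨fun x y => rfl, fun β hβ => hβ, fun β hβ => hβ⟩
  | mul x y hx hy ihx ihy =>
    refine ⟨fun u v => by
      have : ∀ u, (x * y) u = x (y u) := fun _ => rfl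
      rw [this, this, ihx.1, ihy.1], fun β hβ => ihx.2.1 _ (ihy.2.1 β hβ), fun β hβ => ?_⟩
    have : ((x*y)⁻¹ : V ≃ₗ[ℝ] V) = y⁻¹ * x⁻¹ := by rw [mul_inv_rev]
    rw [this]
    exact ihy.2.2 _ (ihx.2.2 β hβ)
  | inv x hx ihx =>
    refine ⟨fun u v => ?_, ihx.2.2, by simpa using ihx.2.1⟩
    have h1 := ihx.1 ((x⁻¹ : V ≃ₗ[ℝ] V) u) ((x⁻¹ : V ≃ₗ[ℝ] V) v)
    have h2 : ∀ u, x ((x⁻¹ : V ≃ₗ[ℝ] V) u) = u := fun u => x.apply_symm_apply u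
    rw [h2, h2] at h1
    exact h1.symm

lemma weyl_inner {Φ : Set V} (hΦ : IsRootSystem Φ) {w : V ≃ₗ[ℝ] V} (hw : w ∈ weylGroup Φ)
    (x y : V) : ⟪w x, w y⟫ = ⟪x, y⟫ := (weyl_props hΦ hw).1 x y

lemma weyl_root_mem {Φ : Set V} (hΦ : IsRootSystem Φ) {w : V ≃ₗ[ℝ] V} (hw : w ∈ weylGroup Φ)
    {β : V} (hβ : β ∈ Φ) : w β ∈ Φ := (weyl_props hΦ hw).2.1 β hβ

lemma weyl_inner_left {Φ : Set V} (hΦ : IsRootSystem Φ) {w : V ≃ₗ[ℝ] V} (hw : w ∈ weylGroup Φ)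
    (x y : V) : ⟪w x, y⟫ = ⟪x, (w⁻¹ : V ≃ₗ[ℝ] V) y⟫ := by
  conv_lhs => rw [show y = w ((w⁻¹ : V ≃ₗ[ℝ] V) y) from (w.apply_symm_apply y).symm]
  exact weyl_inner hΦ hw _ _

end WP65

namespace WP65

variable {V : Type*} [NormedAddCommGroup V] [InnerProductSpace ℝ V]
variable {Φ : Set V} {d : ℕ} {a : Fin d → V}

noncomputable def simpBasis (ha : IsSimpleSystem Φ a) : Module.Basis (Fin d) ℝ V :=
  Module.Basis.mk ha.indep ha.spans.ge

lemma simpBasis_apply (ha : IsSimpleSystem Φ a) (i : Fin d) : simpBasis ha i = a i :=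
  Module.Basis.mk_apply _ _ _

def PosR (ha : IsSimpleSystem Φ a) (x : V) : Prop := ∀ i, 0 ≤ (simpBasis ha).repr x i

lemma pos_total (ha : IsSimpleSystem Φ a) {β : V} (hβ : β ∈ Φ) :
    PosR ha β ∨ PosR ha (-β) := by
  obtain ⟨c, hsign, rfl⟩ := ha.sign β hβ
  have hrep : (simpBasis ha).repr (∑ i, c i • a i) = c := by
    have : (∑ i, c i • a i) = ∑ i, c i • simpBasis ha i := by
      simp [simpBasis_apply]
    rw [this, Module.Basis.repr_sum_self]
  rcases hsign with h | h
  · left; intro i; rw [hrep]; exact h i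
  · right; intro i
    rw [map_neg, Finsupp.neg_apply, hrep]
    simpa using h i

lemma eq_zero_of_pos_neg (ha : IsSimpleSystem Φ a) {β : V} (h1 : PosR ha β)
    (h2 : PosR ha (-β)) : β = 0 := by
  have : (simpBasis ha).repr β = 0 := by
    ext i
    have := h2 i
    rw [map_neg, Finsupp.neg_apply] at this
    have h1i := h1 i
    simp only [Finsupp.coe_zero, Pi.zero_apply]
    linarith
  simpa using congrArg ((simpBasis ha).repr.symm) this

lemma pos_of_not_pos (hΦ : IsRootSystem Φ) (ha : IsSimpleSystem Φ a) {β : V} (hβ : β ∈ Φ)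
    (h : ¬ PosR ha β) : PosR ha (-β) := (pos_total ha hβ).resolve_left h

lemma not_pos_neg_of_pos (hΦ : IsRootSystem Φ) (ha : IsSimpleSystem Φ a) {β : V} (hβ : β ∈ Φ)
    (h : PosR ha β) : ¬ PosR ha (-β) := fun h2 => hΦ.ne_zero β hβ (eq_zero_of_pos_neg ha h h2)

lemma pos_simple (ha : IsSimpleSystem Φ a) (i : Fin d) : PosR ha (a i) := by
  intro j
  rw [← simpBasis_apply ha, Module.Basis.repr_self, Finsupp.single_apply]
  split <;> norm_num

lemma inner_nonneg_of_dominant (ha : IsSimpleSystem Φ a) {v β : V}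
    (hv : ∀ i, 0 ≤ ⟪v, a i⟫) (hβ : PosR ha β) : 0 ≤ ⟪v, β⟫ := by
  conv_lhs => rw [show (0:ℝ) = 0 from rfl]
  rw [← Module.Basis.sum_repr (simpBasis ha) β, inner_sum]
  refine Finset.sum_nonneg fun i _ => ?_
  rw [real_inner_smul_right, simpBasis_apply]
  exact mul_nonneg (hβ i) (hv i)

/-- If `β` is a positive root distinct from `a i`, then `s_i β` is again a positive root
distinct from `a i`. -/
lemma sRefl_simple_pos (hΦ : IsRootSystem Φ) (ha : IsSimpleSystem Φ a) {i : Fin d} {β : V}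
    (hβ : β ∈ Φ) (hpos : PosR ha β) (hne : β ≠ a i) :
    sRefl (a i) β ∈ Φ ∧ PosR ha (sRefl (a i) β) ∧ sRefl (a i) β ≠ a i := by
  have hai : a i ∈ Φ := ha.mem i
  have hmem : sRefl (a i) β ∈ Φ := weyl_root_mem hΦ (sRefl_mem hai) hβ
  have hneg : β ≠ -(a i) := by
    rintro rfl
    have := hpos i
    rw [map_neg, Finsupp.neg_apply, ← simpBasis_apply ha, Module.Basis.repr_self,
      Finsupp.single_apply] at this
    norm_num at this
  -- find j ≠ i with positive coefficient
  obtain ⟨j, hji, hj⟩ : ∃ j, j ≠ i ∧ 0 < (simpBasis ha).repr β j := by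
    by_contra hcon
    push_neg at hcon
    have hco : ∀ j, j ≠ i → (simpBasis ha).repr β j = 0 := fun j hj =>
      le_antisymm (hcon j hj) (hpos j)
    have hβeq : β = ((simpBasis ha).repr β i) • a i := by
      conv_lhs => rw [← Module.Basis.sum_repr (simpBasis ha) β]
      rw [Finset.sum_eq_single i]
      · rw [simpBasis_apply]
      · intro j _ hj; rw [hco j hj, zero_smul]
      · intro h; exact absurd (Finset.mem_univ i) h
    rcases hΦ.smul_mem (a i) hai _ (hβeq ▸ hβ) with h1 | h1
    · exact hne (by rw [hβeq, h1, one_smul])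
    · exact hneg (by rw [hβeq, h1, neg_one_smul])
  -- coefficient j is unchanged by s_i
  have hrepj : (simpBasis ha).repr (sRefl (a i) β) j = (simpBasis ha).repr β j := by
    simp only [sRefl_apply, reflFormula, map_sub, map_smul, Finsupp.sub_apply,
      Finsupp.smul_apply]
    rw [← simpBasis_apply ha i, Module.Basis.repr_self, Finsupp.single_apply, if_neg (Ne.symm hji)]
    simp
  have hposs : PosR ha (sRefl (a i) β) := by
    rcases pos_total ha hmem with h | h
    · exact h
    · exfalso
      have := h j
      rw [map_neg, Finsupp.neg_apply, hrepj] at this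
      linarith
  refine ⟨hmem, hposs, fun hcon => ?_⟩
  have h2 : sRefl (a i) (sRefl (a i) β) = sRefl (a i) (a i) := by rw [hcon]
  rw [show sRefl (a i) (sRefl (a i) β) = β from reflFormula_invol (a i) β,
    sRefl_root (a i) (hΦ.ne_zero _ hai)] at h2
  exact hneg h2

end WP65

namespace WP65

variable {V : Type*} [NormedAddCommGroup V] [InnerProductSpace ℝ V]
variable {Φ : Set V} {d : ℕ} {a : Fin d → V}

lemma sRefl_neg (α : V) : sRefl (-α) = sRefl α := by
  ext x
  simp only [sRefl_apply, reflFormula, inner_neg_right, inner_neg_left, inner_neg_neg,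
    smul_neg, mul_neg, neg_div, neg_smul, neg_neg, div_neg]

lemma conj_sRefl (hΦ : IsRootSystem Φ) {w : V ≃ₗ[ℝ] V} (hw : w ∈ weylGroup Φ) (α : V) :
    w * sRefl α * w⁻¹ = sRefl (w α) := by
  ext x
  have happ : (w * sRefl α * w⁻¹) x = w (sRefl α ((w⁻¹ : V ≃ₗ[ℝ] V) x)) := rfl
  have h0 : ∀ y, w ((w⁻¹ : V ≃ₗ[ℝ] V) y) = y := fun y => w.apply_symm_apply y
  have h1 : ⟪(w⁻¹ : V ≃ₗ[ℝ] V) x, α⟫ = ⟪x, w α⟫ := by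
    rw [← weyl_inner hΦ hw ((w⁻¹ : V ≃ₗ[ℝ] V) x) α, h0]
  have h2 : ⟪w α, w α⟫ = ⟪α, α⟫ := weyl_inner hΦ hw α α
  rw [happ]
  simp only [sRefl_apply, reflFormula, map_sub, map_smul, h0, h1, h2]

noncomputable def prodW (a : Fin d → V) (L : List (Fin d)) : V ≃ₗ[ℝ] V :=
  (L.map fun i => sRefl (a i)).prod

@[simp] lemma prodW_nil : prodW a ([] : List (Fin d)) = 1 := rfl

lemma prodW_cons (i : Fin d) (L : List (Fin d)) :
    prodW a (i :: L) = sRefl (a i) * prodW a L := by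
  simp [prodW]

lemma prodW_append (L M : List (Fin d)) :
    prodW a (L ++ M) = prodW a L * prodW a M := by
  simp [prodW]

lemma prodW_concat (L : List (Fin d)) (i : Fin d) :
    prodW a (L ++ [i]) = prodW a L * sRefl (a i) := by
  rw [prodW_append]; simp [prodW]

lemma prodW_mem (ha : IsSimpleSystem Φ a) (L : List (Fin d)) : prodW a L ∈ weylGroup Φ := by
  induction L with
  | nil => exact one_mem _
  | cons i T ih => rw [prodW_cons]; exact mul_mem (sRefl_mem (ha.mem i)) ih

lemma prodW_inv (L : List (Fin d)) : (prodW a L)⁻¹ = prodW a L.reverse := by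
  induction L with
  | nil => simp
  | cons i T ih =>
    rw [prodW_cons, mul_inv_rev, ih, List.reverse_cons, prodW_concat, sRefl_inv]

/-- height of a vector: sum of its coordinates in the simple basis -/
noncomputable def htS (ha : IsSimpleSystem Φ a) (x : V) : ℝ := ∑ i, (simpBasis ha).repr x i

lemma inner_self_pos' {x : V} (h : x ≠ 0) : (0:ℝ) < ⟪x, x⟫ :=
  lt_of_le_of_ne real_inner_self_nonneg (Ne.symm (inner_self_ne_zero.mpr h))

lemma sRefl_pos_word (hΦ : IsRootSystem Φ) (ha : IsSimpleSystem Φ a) :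
    ∀ (β : V), β ∈ Φ → PosR ha β → ∃ L, sRefl β = prodW a L := by
  suffices h : ∀ (n : ℕ) (β : V), β ∈ Φ → PosR ha β →
      ({γ ∈ Φ | PosR ha γ ∧ htS ha γ < htS ha β}).ncard = n →
      ∃ L, sRefl β = prodW a L by
    intro β hβ hp; exact h _ β hβ hp rfl
  intro n
  induction n using Nat.strong_induction_on with
  | _ n ih =>
  intro β hβ hpos hcard
  -- find i with ⟪β, a i⟫ > 0
  have hββ : (0:ℝ) < ⟪β, β⟫ := inner_self_pos' (hΦ.ne_zero β hβ)
  have hsum : ⟪β, β⟫ = ∑ i, (simpBasis ha).repr β i * ⟪β, a i⟫ := by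
    have h1 : ⟪β, (∑ i, (simpBasis ha).repr β i • simpBasis ha i : V)⟫
        = ∑ i, (simpBasis ha).repr β i * ⟪β, a i⟫ := by
      rw [inner_sum]
      refine Finset.sum_congr rfl fun i _ => ?_
      rw [real_inner_smul_right, simpBasis_apply]
    rw [← h1, Module.Basis.sum_repr]
  obtain ⟨i, -, hi⟩ : ∃ i ∈ Finset.univ, 0 < (simpBasis ha).repr β i * ⟪β, a i⟫ := by
    by_contra hcon
    push_neg at hcon
    have : ⟪β, β⟫ ≤ 0 := hsum ▸ Finset.sum_nonpos fun i hh => hcon i hh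
    linarith
  have hβi : 0 < ⟪β, a i⟫ := by
    rcases lt_or_ge 0 ⟪β, a i⟫ with h | h
    · exact h
    · nlinarith [hpos i]
  by_cases hne : β = a i
  · exact ⟨[i], by rw [hne]; simp [prodW]⟩
  · obtain ⟨hmem, hposs, hnes⟩ := sRefl_simple_pos hΦ ha hβ hpos hne
    set γ := sRefl (a i) β with hγ
    -- height decreases
    have hht : htS ha γ < htS ha β := by
      have hrep : ∀ j, (simpBasis ha).repr γ j =
          (simpBasis ha).repr β j - (2 * ⟪β, a i⟫ / ⟪a i, a i⟫) * (if i = j then 1 else 0) := by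
        intro j
        simp only [hγ, sRefl_apply, reflFormula, map_sub, map_smul, Finsupp.sub_apply,
          Finsupp.smul_apply]
        rw [← simpBasis_apply ha i, Module.Basis.repr_self, Finsupp.single_apply]
        simp [smul_eq_mul]
      have hA : (0:ℝ) < ⟪a i, a i⟫ := inner_self_pos' (hΦ.ne_zero _ (ha.mem i))
      have hk : 0 < 2 * ⟪β, a i⟫ / ⟪a i, a i⟫ := by positivity
      unfold htS
      rw [Finset.sum_congr rfl fun j _ => hrep j, Finset.sum_sub_distrib]
      have : ∑ j, (2 * ⟪β, a i⟫ / ⟪a i, a i⟫) * (if i = j then (1:ℝ) else 0)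
          = 2 * ⟪β, a i⟫ / ⟪a i, a i⟫ := by
        simp [mul_ite]
      rw [this]
      linarith
    -- measure decreases
    have hsub : {δ ∈ Φ | PosR ha δ ∧ htS ha δ < htS ha γ}
        ⊂ {δ ∈ Φ | PosR ha δ ∧ htS ha δ < htS ha β} := by
      constructor
      · rintro δ ⟨hδ, hp, hh⟩; exact ⟨hδ, hp, hh.trans hht⟩
      · intro hss
        have : γ ∈ {δ ∈ Φ | PosR ha δ ∧ htS ha δ < htS ha γ} :=
          hss ⟨hmem, hposs, hht⟩
        exact absurd this.2.2 (lt_irrefl _)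
    have hfin : {δ ∈ Φ | PosR ha δ ∧ htS ha δ < htS ha β}.Finite :=
      hΦ.finite.subset fun δ hδ => hδ.1
    have hlt : ({δ ∈ Φ | PosR ha δ ∧ htS ha δ < htS ha γ}).ncard <
        ({δ ∈ Φ | PosR ha δ ∧ htS ha δ < htS ha β}).ncard :=
      Set.ncard_lt_ncard hsub hfin
    obtain ⟨L, hL⟩ := ih _ (hcard ▸ hlt) γ hmem hposs rfl
    -- s_β = s_i s_γ s_i
    refine ⟨i :: (L ++ [i]), ?_⟩
    have hβγ : β = sRefl (a i) γ := (reflFormula_invol (a i) β).symm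
    have hconj := conj_sRefl hΦ (sRefl_mem (ha.mem i)) γ
    rw [sRefl_inv] at hconj
    rw [hβγ, ← hconj, prodW_cons, prodW_concat, hL, mul_assoc]

end WP65


namespace WP65

variable {V : Type*} [NormedAddCommGroup V] [InnerProductSpace ℝ V]
variable {Φ : Set V} {d : ℕ} {a : Fin d → V}

lemma weyl_word (hΦ : IsRootSystem Φ) (ha : IsSimpleSystem Φ a) {w : V ≃ₗ[ℝ] V}
    (hw : w ∈ weylGroup Φ) : ∃ L, w = prodW a L := by
  induction hw using Subgroup.closure_induction with
  | mem g hg =>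
    obtain ⟨α, hα, hr⟩ := hg
    have hg' : g = sRefl α := LinearEquiv.ext hr
    rcases pos_total ha hα with h | h
    · obtain ⟨L, hL⟩ := sRefl_pos_word hΦ ha α hα h
      exact ⟨L, hg' ▸ hL⟩
    · have hmem : -α ∈ Φ := by
        have h2 := weyl_root_mem hΦ (sRefl_mem hα) hα
        rwa [sRefl_root α (hΦ.ne_zero α hα)] at h2
      obtain ⟨L, hL⟩ := sRefl_pos_word hΦ ha (-α) hmem h
      rw [sRefl_neg] at hL
      exact ⟨L, hg' ▸ hL⟩
  | one => exact ⟨[], rfl⟩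
  | mul x y _ _ ihx ihy =>
    obtain ⟨Lx, hx⟩ := ihx; obtain ⟨Ly, hy⟩ := ihy
    exact ⟨Lx ++ Ly, by rw [prodW_append, hx, hy]⟩
  | inv x _ ihx =>
    obtain ⟨Lx, hx⟩ := ihx
    exact ⟨Lx.reverse, by rw [← prodW_inv, hx]⟩

/-- The exchange lemma: if `w(a i)` is a negative root for `w = prodW M`, then `w * s_i`
admits a strictly shorter word. -/
lemma exchange (hΦ : IsRootSystem Φ) (ha : IsSimpleSystem Φ a) :
    ∀ (M : List (Fin d)) (i : Fin d),
      ¬ PosR ha (prodW a M (a i)) →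
      ∃ M', M'.length + 1 = M.length ∧ prodW a M' = prodW a M * sRefl (a i) := by
  intro M
  induction M with
  | nil =>
    intro i h
    exact absurd (pos_simple ha i) (by simpa using h)
  | cons j T ihT =>
    intro i h
    by_cases hT : PosR ha (prodW a T (a i))
    · have hγΦ : prodW a T (a i) ∈ Φ := weyl_root_mem hΦ (prodW_mem ha T) (ha.mem i)
      have hsj : sRefl (a j) (prodW a T (a i)) = prodW a (j::T) (a i) := by
        rw [prodW_cons]; rfl
      have hγeq : prodW a T (a i) = a j := by
        by_contra hne
        exact h (hsj ▸ (sRefl_simple_pos hΦ ha hγΦ hT hne).2.1)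
      have hconj := conj_sRefl hΦ (prodW_mem ha T) (a i)
      rw [hγeq] at hconj
      refine ⟨T, by simp, ?_⟩
      rw [prodW_cons, ← hconj]
      rw [inv_mul_cancel_right, mul_assoc, sRefl_sq, mul_one]
    · obtain ⟨T', hlen, hT'⟩ := ihT i hT
      refine ⟨j :: T', by simp [← hlen], ?_⟩
      rw [prodW_cons, prodW_cons, hT', mul_assoc]

/-- Key inequality: for `v`, `μ` dominant and `w` in the Weyl group, `⟪v, wμ⟫ ≤ ⟪v, μ⟫`. -/
lemma inner_orbit_le_word (hΦ : IsRootSystem Φ) (ha : IsSimpleSystem Φ a) {v μ : V}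
    (hv : ∀ i, 0 ≤ ⟪v, a i⟫) (hμ : ∀ i, 0 ≤ ⟪μ, a i⟫) :
    ∀ (L : List (Fin d)), ⟪v, prodW a L μ⟫ ≤ ⟪v, μ⟫ := by
  suffices h : ∀ (n : ℕ) (L : List (Fin d)), L.length ≤ n → ⟪v, prodW a L μ⟫ ≤ ⟪v, μ⟫ by
    intro L; exact h L.length L le_rfl
  intro n
  induction n with
  | zero =>
    intro L hL
    rw [List.length_eq_zero_iff.mp (Nat.le_zero.mp hL)]
    simp
  | succ n ih =>
    intro L hL
    rcases List.eq_nil_or_concat L with rfl | ⟨L', i, rfl⟩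
    · simp
    · simp only [List.concat_eq_append] at hL ⊢
      by_cases hp : PosR ha (prodW a L' (a i))
      · have hA : (0:ℝ) < ⟪a i, a i⟫ := inner_self_pos' (hΦ.ne_zero _ (ha.mem i))
        have hk : 0 ≤ 2 * ⟪μ, a i⟫ / ⟪a i, a i⟫ :=
          div_nonneg (by linarith [hμ i]) hA.le
        have happ : prodW a (L' ++ [i]) μ
            = prodW a L' μ - (2 * ⟪μ, a i⟫ / ⟪a i, a i⟫) • prodW a L' (a i) := by
          rw [prodW_concat]
          have : (prodW a L' * sRefl (a i)) μ = prodW a L' (sRefl (a i) μ) := rfl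
          rw [this, sRefl_apply, reflFormula, map_sub, map_smul]
        have hlen' : L'.length ≤ n := by
          have := hL; simp only [List.length_append, List.length_cons, List.length_nil] at this
          omega
        have h1 : 0 ≤ ⟪v, prodW a L' (a i)⟫ := inner_nonneg_of_dominant ha hv hp
        calc ⟪v, prodW a (L' ++ [i]) μ⟫
            = ⟪v, prodW a L' μ⟫ - (2 * ⟪μ, a i⟫ / ⟪a i, a i⟫) * ⟪v, prodW a L' (a i)⟫ := by
              rw [happ, inner_sub_right, real_inner_smul_right]
          _ ≤ ⟪v, prodW a L' μ⟫ := by nlinarith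
          _ ≤ ⟪v, μ⟫ := ih L' hlen'
      · obtain ⟨M', hlen, hM'⟩ := exchange hΦ ha L' i hp
        have : prodW a (L' ++ [i]) = prodW a M' := by rw [prodW_concat, hM']
        rw [this]
        refine ih M' ?_
        have := hL; simp only [List.length_append, List.length_cons, List.length_nil] at this
        omega

lemma inner_orbit_le (hΦ : IsRootSystem Φ) (ha : IsSimpleSystem Φ a) {v μ : V}
    (hv : ∀ i, 0 ≤ ⟪v, a i⟫) (hμ : ∀ i, 0 ≤ ⟪μ, a i⟫) {w : V ≃ₗ[ℝ] V}
    (hw : w ∈ weylGroup Φ) : ⟪v, w μ⟫ ≤ ⟪v, μ⟫ := by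
  obtain ⟨L, rfl⟩ := weyl_word hΦ ha hw
  exact inner_orbit_le_word hΦ ha hv hμ L

end WP65

namespace WP65

variable {V : Type*} [NormedAddCommGroup V] [InnerProductSpace ℝ V]
variable {Φ : Set V} {d : ℕ} {a : Fin d → V}

lemma weyl_finite (hΦ : IsRootSystem Φ) : (weylGroup Φ : Set (V ≃ₗ[ℝ] V)).Finite := by
  have hΦf : Finite ↥Φ := hΦ.finite.to_subtype
  rw [← Set.finite_coe_iff]
  let F : ↥(weylGroup Φ : Set (V ≃ₗ[ℝ] V)) → (↥Φ → ↥Φ) := fun w x =>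
    ⟨w.1 x.1, weyl_root_mem hΦ w.2 x.2⟩
  have hinj : Function.Injective F := by
    intro w1 w2 hF
    apply Subtype.ext
    have heq : (w1.1 : V →ₗ[ℝ] V) = (w2.1 : V →ₗ[ℝ] V) := by
      apply LinearMap.ext_on hΦ.spans
      intro x hx
      have := congrFun hF ⟨x, hx⟩
      simpa [F, Subtype.ext_iff] using this
    exact LinearEquiv.toLinearMap_injective heq
  exact Finite.of_injective F hinj

lemma lam_inner {lam : Fin d → V} (hΦ : IsRootSystem Φ) (ha : IsSimpleSystem Φ a)
    (hlam : ∀ i j, ⟪lam i, coroot (a j)⟫ = if i = j then (1 : ℝ) else 0) (i j : Fin d) :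
    ⟪lam i, a j⟫ = (if i = j then (1:ℝ) else 0) * (⟪a j, a j⟫ / 2) := by
  have hA : (0:ℝ) < ⟪a j, a j⟫ := inner_self_pos' (hΦ.ne_zero _ (ha.mem j))
  have := hlam i j
  rw [coroot, real_inner_smul_right] at this
  field_simp at this ⊢
  split <;> simp_all <;> linarith

/-- Every vector has a dominant representative in its Weyl orbit. -/
lemma exists_dominant {lam : Fin d → V} (hΦ : IsRootSystem Φ) (ha : IsSimpleSystem Φ a)
    (hlam : ∀ i j, ⟪lam i, coroot (a j)⟫ = if i = j then (1 : ℝ) else 0) (u : V) :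
    ∃ w ∈ weylGroup Φ, ∀ i, 0 ≤ ⟪w u, a i⟫ := by
  classical
  set ρ : V := ∑ i, lam i with hρ
  have hρa : ∀ i, ⟪ρ, a i⟫ = ⟪a i, a i⟫ / 2 := by
    intro i
    rw [hρ, sum_inner, Finset.sum_eq_single i]
    · rw [lam_inner hΦ ha hlam i i, if_pos rfl, one_mul]
    · intro j _ hj; rw [lam_inner hΦ ha hlam j i, if_neg hj, zero_mul]
    · intro hi; exact absurd (Finset.mem_univ i) hi
  have hfin := weyl_finite hΦ
  have hne : hfin.toFinset.Nonempty := ⟨1, by simp [Set.Finite.mem_toFinset]⟩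
  obtain ⟨w₀, hw₀mem, hw₀max⟩ := hfin.toFinset.exists_max_image (fun w => ⟪w u, ρ⟫) hne
  rw [Set.Finite.mem_toFinset] at hw₀mem
  refine ⟨w₀, hw₀mem, fun i => ?_⟩
  by_contra hneg
  push_neg at hneg
  have hA : (0:ℝ) < ⟪a i, a i⟫ := inner_self_pos' (hΦ.ne_zero _ (ha.mem i))
  have hw' : sRefl (a i) * w₀ ∈ weylGroup Φ := mul_mem (sRefl_mem (ha.mem i)) hw₀mem
  have happ : (sRefl (a i) * w₀) u = w₀ u - (2 * ⟪w₀ u, a i⟫ / ⟪a i, a i⟫) • a i := rfl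
  have hval : ⟪(sRefl (a i) * w₀) u, ρ⟫ = ⟪w₀ u, ρ⟫ - ⟪w₀ u, a i⟫ := by
    have h3 : ⟪a i, ρ⟫ = ⟪a i, a i⟫/2 := by rw [real_inner_comm]; exact hρa i
    rw [happ, inner_sub_left, real_inner_smul_left, h3]
    field_simp
  have := hw₀max (sRefl (a i) * w₀) (hfin.mem_toFinset.mpr hw')
  rw [hval] at this
  linarith

end WP65

namespace WP65

variable {V : Type*} [NormedAddCommGroup V] [InnerProductSpace ℝ V]

lemma convexHull_finset_sum {ι : Type*} (s : Finset ι) (f : ι → Set V) :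
    convexHull ℝ (∑ i ∈ s, f i) = ∑ i ∈ s, convexHull ℝ (f i) := by
  classical
  induction s using Finset.cons_induction with
  | empty =>
    rw [Finset.sum_empty, Finset.sum_empty, show (0 : Set V) = {0} from rfl,
      convexHull_singleton]
  | cons i s hi ih => rw [Finset.sum_cons, Finset.sum_cons, convexHull_add, ih]

end WP65

/-- **Proposition 6.5**: for nonnegative reals `a_1, …, a_d`, the weight polytope of
`a_1λ_1 + ⋯ + a_dλ_d` is the Minkowski sum `a_1·conv(Wλ_1) + ⋯ + a_d·conv(Wλ_d)` of the
scaled fundamental weight polytopes. -/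
theorem weight_polytope_eq_minkowski_sum_of_fundamental
    {V : Type*} [NormedAddCommGroup V] [InnerProductSpace ℝ V] [FiniteDimensional ℝ V]
    {Φ : Set V} (hΦ : IsRootSystem Φ) {d : ℕ} {a : Fin d → V} (ha : IsSimpleSystem Φ a)
    {lam : Fin d → V} (hlam : ∀ i j, ⟪lam i, coroot (a j)⟫ = if i = j then (1 : ℝ) else 0)
    (c : Fin d → ℝ) (hc : ∀ i, 0 ≤ c i) :
    convexHull ℝ {x | ∃ w ∈ weylGroup Φ, x = w (∑ i, c i • lam i)} =
      ∑ i : Fin d, c i • convexHull ℝ {x | ∃ w ∈ weylGroup Φ, x = w (lam i)} := by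
  classical
  open WP65 in
  set lamT : V := ∑ i, c i • lam i with hlamT
  set S : Fin d → Set V := fun i => {x | ∃ w ∈ weylGroup Φ, x = w (lam i)} with hS
  set Orb : Set V := {x | ∃ w ∈ weylGroup Φ, x = w lamT} with hOrb
  -- dominance facts
  have hdomlam : ∀ i j, 0 ≤ ⟪lam i, a j⟫ := by
    intro i j
    rw [WP65.lam_inner hΦ ha hlam i j]
    have hA : (0:ℝ) < ⟪a j, a j⟫ := WP65.inner_self_pos' (hΦ.ne_zero _ (ha.mem j))
    by_cases h : i = j
    · rw [if_pos h]; nlinarith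
    · rw [if_neg h]; simp
  have hdomT : ∀ j, 0 ≤ ⟪lamT, a j⟫ := by
    intro j
    rw [hlamT, sum_inner]
    exact Finset.sum_nonneg fun i _ => by
      rw [real_inner_smul_left]; exact mul_nonneg (hc i) (hdomlam i j)
  -- rewrite RHS as a single convex hull
  have hRHS : ∑ i : Fin d, c i • convexHull ℝ (S i)
      = convexHull ℝ (∑ i : Fin d, c i • S i) := by
    rw [WP65.convexHull_finset_sum]
    exact Finset.sum_congr rfl fun i _ => (convexHull_smul (c i) (S i)).symm
  rw [show (∑ i : Fin d, c i • convexHull ℝ {x | ∃ w ∈ weylGroup Φ, x = w (lam i)})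
      = ∑ i : Fin d, c i • convexHull ℝ (S i) from rfl, hRHS]
  -- facts about Orb
  have hOrbfin : Orb.Finite := by
    have himg : Orb = (fun w : V ≃ₗ[ℝ] V => w lamT) '' (weylGroup Φ : Set (V ≃ₗ[ℝ] V)) := by
      ext x
      constructor
      · rintro ⟨w, hw, rfl⟩; exact ⟨w, hw, rfl⟩
      · rintro ⟨w, hw, rfl⟩; exact ⟨w, hw, rfl⟩
    rw [himg]
    exact (WP65.weyl_finite hΦ).image _
  apply Set.Subset.antisymm
  · -- easy inclusion
    apply convexHull_min _ (convex_convexHull ℝ _)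
    rintro x ⟨w, hw, rfl⟩
    apply subset_convexHull
    have : w lamT = ∑ i, c i • w (lam i) := by
      rw [hlamT, map_sum]
      exact Finset.sum_congr rfl fun i _ => by rw [map_smul]
    rw [this]
    exact Set.finset_sum_mem_finset_sum Finset.univ _ _ fun i _ =>
      Set.smul_mem_smul_set ⟨w, hw, rfl⟩
  · -- hard inclusion
    apply convexHull_min _ (convex_convexHull ℝ _)
    intro p hp
    rw [Set.mem_fintype_sum] at hp
    obtain ⟨g, hg, hgp⟩ := hp
    choose x hx hgx using fun i => hg i
    choose wi hwi hxw using fun i => hx i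
    -- p = ∑ c i • wi i (lam i)
    have hpeq : p = ∑ i, c i • (wi i) (lam i) := by
      rw [← hgp]
      exact Finset.sum_congr rfl fun i _ => by rw [← hgx i, hxw i]
    by_contra hcon
    have hcvx : Convex ℝ (convexHull ℝ Orb) := convex_convexHull ℝ _
    have hcls : IsClosed (convexHull ℝ Orb) :=
      (hOrbfin.isCompact_convexHull (𝕜 := ℝ)).isClosed
    obtain ⟨f, t, hft, htp⟩ := geometric_hahn_banach_closed_point hcvx hcls hcon
    set uvec : V := (InnerProductSpace.toDual ℝ V).symm f with huvec
    have hu : ∀ y, ⟪uvec, y⟫ = f y := fun y => InnerProductSpace.toDual_symm_apply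
    obtain ⟨w₀, hw₀, hdom⟩ := WP65.exists_dominant hΦ ha hlam uvec
    -- bound f p
    have hbound : ∀ i, f ((wi i) (lam i)) ≤ ⟪w₀ uvec, lam i⟫ := by
      intro i
      have h1 : f ((wi i) (lam i)) = ⟪uvec, (wi i) (lam i)⟫ := (hu _).symm
      have h2 : ⟪uvec, (wi i) (lam i)⟫ = ⟪w₀ uvec, w₀ ((wi i) (lam i))⟫ :=
        (WP65.weyl_inner hΦ hw₀ _ _).symm
      have h3 : w₀ ((wi i) (lam i)) = (w₀ * wi i) (lam i) := rfl
      rw [h1, h2, h3]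
      exact WP65.inner_orbit_le hΦ ha hdom (fun j => hdomlam i j) (mul_mem hw₀ (hwi i))
    have hfp : f p ≤ f ((w₀⁻¹ : V ≃ₗ[ℝ] V) lamT) := by
      have e1 : f p = ∑ i, c i * f ((wi i) (lam i)) := by
        rw [hpeq, map_sum]
        exact Finset.sum_congr rfl fun i _ => by rw [map_smul]; rfl
      have e2 : f ((w₀⁻¹ : V ≃ₗ[ℝ] V) lamT) = ⟪w₀ uvec, lamT⟫ := by
        calc f ((w₀⁻¹ : V ≃ₗ[ℝ] V) lamT)
            = ⟪uvec, (w₀⁻¹ : V ≃ₗ[ℝ] V) lamT⟫ := (hu _).symm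
          _ = ⟪w₀ uvec, w₀ ((w₀⁻¹ : V ≃ₗ[ℝ] V) lamT)⟫ := (WP65.weyl_inner hΦ hw₀ _ _).symm
          _ = ⟪w₀ uvec, lamT⟫ := by
              rw [show w₀ ((w₀⁻¹ : V ≃ₗ[ℝ] V) lamT) = lamT from w₀.apply_symm_apply lamT]
      have e3 : ⟪w₀ uvec, lamT⟫ = ∑ i, c i * ⟪w₀ uvec, lam i⟫ := by
        rw [hlamT, inner_sum]
        exact Finset.sum_congr rfl fun i _ => by rw [real_inner_smul_right]
      rw [e1, e2, e3]
      exact Finset.sum_le_sum fun i _ => mul_le_mul_of_nonneg_left (hbound i) (hc i)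
    have hlast : f ((w₀⁻¹ : V ≃ₗ[ℝ] V) lamT) < t :=
      hft _ (subset_convexHull ℝ Orb ⟨w₀⁻¹, inv_mem hw₀, rfl⟩)
    linarith
end

section
/- (Corollary 2.7, polytope case) Let A be a finite set of vectors in a finite-dimensional real vector space V and Z(A) its zonotope. If a polytope P is a weak Minkowski summand of Z(A) (there exist a polytope Q and k > 0 with P + Q = k·Z(A)), then every face of P is also a weak Minkowski summand of Z(A); i.e., every face of a deformation of Z(A) is a deformation of Z(A). -/
open scoped Pointwise

/-- `F` is a face of `P`: the subset of `P` where some linear functional attains its maximum. -/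
def IsFaceOfL {V : Type*} [AddCommGroup V] [Module ℝ V] (P F : Set V) : Prop :=
  ∃ u : V →ₗ[ℝ] ℝ, F = {v ∈ P | ∀ x ∈ P, u x ≤ u v}

/-! Taking the face in direction `u` commutes with Minkowski sums and positive dilations, so
`F + face_u Q = face_u (P + Q) = k • Σ face_u [0, v]`. Each face of a segment `[0, v]` is a
point or the segment itself, hence a summand of `[0, v]`; adding `k` times the complementary
summands to `face_u Q` yields `Q'`. -/

section Polytope

variable {V : Type*} [AddCommGroup V] [Module ℝ V]

lemma isPolytope_segment (a b : V) : IsPolytope (segment ℝ a b) := by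
  classical
  exact ⟨{a, b}, ⟨a, by simp⟩, by rw [← convexHull_pair]; norm_cast⟩

lemma isPolytope_zero : IsPolytope (0 : Set V) :=
  ⟨{0}, ⟨0, by simp⟩, by rw [Finset.coe_singleton, convexHull_singleton, Set.singleton_zero]⟩

lemma IsPolytope.add {P Q : Set V} (hP : IsPolytope P) (hQ : IsPolytope Q) :
    IsPolytope (P + Q) := by
  classical
  obtain ⟨S, hS, rfl⟩ := hP
  obtain ⟨T, hT, rfl⟩ := hQ
  exact ⟨S + T, hS.add hT, by rw [Finset.coe_add, convexHull_add]⟩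

lemma IsPolytope.smul {P : Set V} (hP : IsPolytope P) (k : ℝ) : IsPolytope (k • P) := by
  classical
  obtain ⟨S, hS, rfl⟩ := hP
  exact ⟨k • S, hS.smul_finset, by rw [Finset.coe_smul_finset, convexHull_smul]⟩

lemma IsPolytope.sum {ι : Type*} {s : Finset ι} {f : ι → Set V}
    (hf : ∀ i ∈ s, IsPolytope (f i)) : IsPolytope (∑ i ∈ s, f i) := by
  induction s using Finset.cons_induction with
  | empty => exact isPolytope_zero
  | cons i s hi ih =>
    rw [Finset.sum_cons]
    exact (hf i (Finset.mem_cons_self i s)).add (ih fun j hj => hf j (Finset.mem_cons_of_mem hj))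

end Polytope

section ExposedFace

variable {V : Type*} [AddCommGroup V] [Module ℝ V]

def exposedFace (u : V →ₗ[ℝ] ℝ) (A : Set V) : Set V := {v ∈ A | ∀ x ∈ A, u x ≤ u v}

variable (u : V →ₗ[ℝ] ℝ)

lemma exposedFace_add (A B : Set V) :
    exposedFace u (A + B) = exposedFace u A + exposedFace u B := by
  ext z
  constructor
  · rintro ⟨⟨a, ha, b, hb, rfl⟩, hmax⟩
    refine ⟨a, ⟨ha, fun x hx => ?_⟩, b, ⟨hb, fun y hy => ?_⟩, rfl⟩
    · simpa using hmax (x + b) ⟨x, hx, b, hb, rfl⟩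
    · simpa using hmax (a + y) ⟨a, ha, y, hy, rfl⟩
  · rintro ⟨a, ⟨ha, hamax⟩, b, ⟨hb, hbmax⟩, rfl⟩
    refine ⟨⟨a, ha, b, hb, rfl⟩, ?_⟩
    rintro x ⟨p, hp, q, hq, rfl⟩
    simpa only [map_add] using add_le_add (hamax p hp) (hbmax q hq)

lemma exposedFace_smul {k : ℝ} (hk : 0 < k) (A : Set V) :
    exposedFace u (k • A) = k • exposedFace u A := by
  ext z
  constructor
  · rintro ⟨⟨a, ha, rfl⟩, hmax⟩
    refine ⟨a, ⟨ha, fun x hx => ?_⟩, rfl⟩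
    have := hmax (k • x) ⟨x, hx, rfl⟩
    simp only [map_smul, smul_eq_mul] at this
    exact le_of_mul_le_mul_left this hk
  · rintro ⟨a, ⟨ha, hamax⟩, rfl⟩
    refine ⟨⟨a, ha, rfl⟩, ?_⟩
    rintro x ⟨y, hy, rfl⟩
    simpa only [map_smul, smul_eq_mul] using mul_le_mul_of_nonneg_left (hamax y hy) hk.le

lemma exposedFace_singleton (a : V) : exposedFace u {a} = {a} := by
  ext z
  simp +contextual [exposedFace]

lemma exposedFace_sum {ι : Type*} (s : Finset ι) (f : ι → Set V) :
    exposedFace u (∑ i ∈ s, f i) = ∑ i ∈ s, exposedFace u (f i) := by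
  induction s using Finset.cons_induction with
  | empty => simpa only [Finset.sum_empty, Set.singleton_zero] using exposedFace_singleton u 0
  | cons i s hi ih => rw [Finset.sum_cons, Finset.sum_cons, exposedFace_add, ih]

lemma Convex.exposedFace {A : Set V} (hA : Convex ℝ A) : Convex ℝ (exposedFace u A) := by
  rintro x ⟨hxA, hx⟩ y ⟨hyA, hy⟩ a b ha hb hab
  refine ⟨hA hxA hyA ha hb hab, fun z hz => ?_⟩
  calc u z = a * u z + b * u z := by rw [← add_mul, hab, one_mul]
    _ ≤ a * u x + b * u y := by gcongr; exacts [hx z hz, hy z hz]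
    _ = u (a • x + b • y) := by simp

/-- A point of the hull on which `u` is maximal is a convex combination of points of `S` on which
`u` takes the same value, all of which are then maximal on `S`. -/
lemma exposedFace_convexHull (S : Set V) :
    exposedFace u (convexHull ℝ S) = convexHull ℝ (exposedFace u S) := by
  refine Set.Subset.antisymm ?_ (convexHull_min ?_ ((convex_convexHull ℝ S).exposedFace u))
  · rintro v ⟨hv, hmax⟩
    obtain ⟨ι, t, w, z, hw0, hw1, hzS, rfl⟩ := (convexHull_eq S).subset hv
    classical
    have hu : u (t.centerMass w z) = ∑ i ∈ t, w i * u (z i) := by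
      simp [Finset.centerMass, hw1, map_sum]
    have hgap : ∀ i ∈ t, w i * (u (t.centerMass w z) - u (z i)) = 0 := by
      refine (Finset.sum_eq_zero_iff_of_nonneg fun i hi => mul_nonneg (hw0 i hi)
        (sub_nonneg.2 (hmax _ (subset_convexHull ℝ S (hzS i hi))))).1 ?_
      simp only [mul_sub, Finset.sum_sub_distrib, ← Finset.sum_mul, hw1, one_mul, hu, sub_self]
    rw [← Finset.centerMass_filter_ne_zero]
    refine Finset.centerMass_mem_convexHull _ (fun i hi => hw0 i (Finset.mem_filter.1 hi).1)
      (by rw [Finset.sum_filter_ne_zero, hw1]; exact one_pos) fun i hi => ?_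
    obtain ⟨hit, hwi⟩ := Finset.mem_filter.1 hi
    have hzi : u (z i) = u (t.centerMass w z) := by
      linarith [(mul_eq_zero.1 (hgap i hit)).resolve_left hwi]
    exact ⟨hzS i hit, fun x hx => hzi ▸ hmax x (subset_convexHull ℝ S hx)⟩
  · rintro s ⟨hs, hsmax⟩
    refine ⟨subset_convexHull ℝ S hs, fun x hx => ?_⟩
    exact convexHull_min hsmax (convex_halfSpace_le u.isLinear (u s)) hx

lemma exposedFace_segment_of_lt {a b : V} (hab : u a < u b) :
    exposedFace u (segment ℝ a b) = {b} := by
  classical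
  have hpair : exposedFace u {a, b} = {b} := by
    ext z
    simp only [exposedFace, Set.mem_insert_iff, Set.mem_singleton_iff, Set.mem_ofPred_eq,
      forall_eq_or_imp, forall_eq]
    constructor
    · rintro ⟨rfl | rfl, -, h⟩
      · exact absurd h hab.not_ge
      · rfl
    · rintro rfl
      exact ⟨Or.inr rfl, hab.le, le_rfl⟩
  rw [← convexHull_pair, exposedFace_convexHull, hpair, convexHull_singleton]

lemma exposedFace_segment_of_eq {a b : V} (hab : u a = u b) :
    exposedFace u (segment ℝ a b) = segment ℝ a b := by
  refine Set.Subset.antisymm (fun x hx => hx.1) fun x hx => ⟨hx, fun y hy => ?_⟩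
  have hconst : ∀ y ∈ segment ℝ a b, u y = u a := fun y hy =>
    convexHull_min (by rintro c (rfl | rfl) <;> simp [hab]) (convex_hyperplane u.isLinear (u a))
      (convexHull_pair (𝕜 := ℝ) a b ▸ hy)
  rw [hconst x hx, hconst y hy]

lemma exists_add_exposedFace_segment_zero (v : V) :
    ∃ G : Set V, IsPolytope G ∧ exposedFace u (segment ℝ 0 v) + G = segment ℝ 0 v := by
  rcases lt_trichotomy (u v) 0 with hv | hv | hv
  · refine ⟨segment ℝ 0 v, isPolytope_segment 0 v, ?_⟩
    rw [segment_symm, exposedFace_segment_of_lt u (by simpa using hv), Set.singleton_zero,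
      zero_add]
  · refine ⟨0, isPolytope_zero, ?_⟩
    rw [exposedFace_segment_of_eq u (by simpa using hv.symm), add_zero]
  · refine ⟨segment ℝ (-v) 0, isPolytope_segment (-v) 0, ?_⟩
    rw [exposedFace_segment_of_lt u (by simpa using hv), Set.singleton_add,
      segment_translate_image, add_neg_cancel, add_zero]

lemma IsPolytope.exposedFace {P : Set V} (hP : IsPolytope P) : IsPolytope (exposedFace u P) := by
  classical
  obtain ⟨S, hS, rfl⟩ := hP
  obtain ⟨m, hm, hmax⟩ := S.exists_max_image u hS
  refine ⟨S.filter fun s => ∀ x ∈ S, u x ≤ u s, ⟨m, Finset.mem_filter.2 ⟨hm, hmax⟩⟩, ?_⟩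
  rw [exposedFace_convexHull]
  congr 1
  ext
  simp [_root_.exposedFace]

end ExposedFace

theorem face_of_zonotope_summand_is_summand_general
    {V : Type*} [AddCommGroup V] [Module ℝ V]
    (A : Finset V) (P : Set V)
    (Q : Set V) (hQ : IsPolytope Q) (k : ℝ) (hk : 0 < k)
    (hPQ : P + Q = k • ∑ v ∈ A, segment ℝ 0 v)
    (F : Set V) (hF : IsFaceOfL P F) :
    ∃ Q' : Set V, IsPolytope Q' ∧ ∃ k' : ℝ, 0 < k' ∧
      F + Q' = k' • ∑ v ∈ A, segment ℝ 0 v := by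
  obtain ⟨u, rfl⟩ := hF
  choose G hG hFG using exists_add_exposedFace_segment_zero u
  refine ⟨exposedFace u Q + k • ∑ v ∈ A, G v, (hQ.exposedFace u).add
    ((IsPolytope.sum fun v _ => hG v).smul k), k, hk, ?_⟩
  have hFQ : exposedFace u P + exposedFace u Q = k • ∑ v ∈ A, exposedFace u (segment ℝ 0 v) := by
    rw [← exposedFace_add, hPQ, exposedFace_smul u hk, exposedFace_sum]
  calc exposedFace u P + (exposedFace u Q + k • ∑ v ∈ A, G v)
      = k • ∑ v ∈ A, (exposedFace u (segment ℝ 0 v) + G v) := by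
        rw [← add_assoc, hFQ, ← smul_add, Finset.sum_add_distrib]
    _ = k • ∑ v ∈ A, segment ℝ 0 v := by simp only [hFG]

/-- **Corollary 2.7 (polytope case)**: if a polytope `P` is a weak Minkowski summand of the
zonotope `Z(A)` (i.e. a deformation of `Z(A)`), then every face of `P` is also a weak
Minkowski summand of `Z(A)`. -/
theorem face_of_zonotope_summand_is_summand
    {V : Type*} [AddCommGroup V] [Module ℝ V] [FiniteDimensional ℝ V]
    (A : Finset V) (P : Set V) (hP : IsPolytope P)
    (Q : Set V) (hQ : IsPolytope Q) (k : ℝ) (hk : 0 < k)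
    (hPQ : P + Q = k • ∑ v ∈ A, segment ℝ 0 v)
    (F : Set V) (hF : IsFaceOfL P F) :
    ∃ Q' : Set V, IsPolytope Q' ∧ ∃ k' : ℝ, 0 < k' ∧
      F + Q' = k' • ∑ v ∈ A, segment ℝ 0 v :=
  face_of_zonotope_summand_is_summand_general A P Q hQ k hk hPQ F hF
end

section
/- (Corollary 4.6.1 / Definition 4.3) The standard Φ-permutohedron, defined as the Minkowski sum Σ_{α ∈ Φ⁺} [−α/2, α/2] of the segments [−α/2, α/2] over all positive roots α, equals the convex hull conv({w·ρ : w ∈ W}) of the W-orbit of ρ = (1/2) Σ_{α ∈ Φ⁺} α. -/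
open scoped RealInnerProductSpace Pointwise

section MyAux

variable {V : Type*} [NormedAddCommGroup V] [InnerProductSpace ℝ V]

lemma reflFormula_self (α : V) (hα : ⟪α, α⟫ ≠ 0) : reflFormula α α = -α := by
  unfold reflFormula
  rw [mul_div_assoc, div_self hα, mul_one, two_smul]
  abel

lemma reflFormula_involutive (α : V) (hα : ⟪α, α⟫ ≠ 0) (x : V) :
    reflFormula α (reflFormula α x) = x := by
  unfold reflFormula
  rw [inner_sub_left, real_inner_smul_left, div_mul_cancel₀ _ hα]
  have h : (2 * (⟪x, α⟫ - 2 * ⟪x, α⟫)) / ⟪α, α⟫ = -((2 * ⟪x, α⟫) / ⟪α, α⟫) := by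
    rw [← neg_div]; ring_nf
  rw [h, neg_smul, sub_neg_eq_add]
  abel

/-- The reflection in `α` as a linear map. -/
noncomputable def reflLin (α : V) : V →ₗ[ℝ] V where
  toFun x := reflFormula α x
  map_add' x y := by
    unfold reflFormula
    rw [inner_add_left]
    rw [show (2 * (⟪x, α⟫ + ⟪y, α⟫)) / ⟪α, α⟫
        = (2 * ⟪x, α⟫) / ⟪α, α⟫ + (2 * ⟪y, α⟫) / ⟪α, α⟫ by ring]
    rw [add_smul]
    abel
  map_smul' c x := by
    unfold reflFormula
    rw [real_inner_smul_left, RingHom.id_apply, smul_sub, smul_smul]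
    rw [show (2 * (c * ⟪x, α⟫)) / ⟪α, α⟫ = c * ((2 * ⟪x, α⟫) / ⟪α, α⟫) by ring]

/-- The reflection in `α` as a linear equivalence. -/
noncomputable def reflEquiv (α : V) (hα : ⟪α, α⟫ ≠ 0) : V ≃ₗ[ℝ] V :=
  LinearEquiv.ofInvolutive (reflLin α) (fun x => reflFormula_involutive α hα x)

lemma reflEquiv_apply (α : V) (hα : ⟪α, α⟫ ≠ 0) (x : V) :
    reflEquiv α hα x = reflFormula α x := rfl

lemma reflEquiv_mem {Φ : Set V} {α : V} (hαΦ : α ∈ Φ) (hα : ⟪α, α⟫ ≠ 0) :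
    reflEquiv α hα ∈ weylGroup Φ :=
  Subgroup.subset_closure ⟨α, hαΦ, fun _ => rfl⟩

lemma weyl_image {Φ : Set V} (hΦ : IsRootSystem Φ) {w : V ≃ₗ[ℝ] V}
    (hw : w ∈ weylGroup Φ) : ⇑w '' Φ = Φ := by
  unfold weylGroup at hw
  induction hw using Subgroup.closure_induction with
  | mem g hg =>
    obtain ⟨α, hα, hg⟩ := hg
    have hcoe : ⇑g = reflFormula α := funext hg
    rw [hcoe, hΦ.refl_maps α hα]
  | one => simp
  | mul x y hx hy ihx ihy =>
    have hcoe : ⇑(x * y) = ⇑x ∘ ⇑y := rfl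
    rw [hcoe, Set.image_comp, ihy, ihx]
  | inv x hx ih =>
    calc ⇑x⁻¹ '' Φ = ⇑x⁻¹ '' (⇑x '' Φ) := by rw [ih]
      _ = Φ := by
          rw [← Set.image_comp]
          have hcoe : ⇑x⁻¹ ∘ ⇑x = id := funext fun v => x.symm_apply_apply v
          rw [hcoe, Set.image_id]

lemma weyl_mem {Φ : Set V} (hΦ : IsRootSystem Φ) {w : V ≃ₗ[ℝ] V}
    (hw : w ∈ weylGroup Φ) {β : V} (hβ : β ∈ Φ) : w β ∈ Φ := by
  rw [← weyl_image hΦ hw]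
  exact Set.mem_image_of_mem _ hβ

lemma weyl_symm_mem {Φ : Set V} (hΦ : IsRootSystem Φ) {w : V ≃ₗ[ℝ] V}
    (hw : w ∈ weylGroup Φ) {β : V} (hβ : β ∈ Φ) : w.symm β ∈ Φ :=
  weyl_mem hΦ (inv_mem hw) hβ

/-- Reindexing a sum over the positive roots along the "sign-normalized" action of a Weyl
group element. -/
lemma sum_reweyl {Φ : Set V} (hΦ : IsRootSystem Φ) (Pos : Finset V)
    (hPosΦ : ∀ β ∈ Pos, β ∈ Φ) (hdi : ∀ β ∈ Φ, β ∈ Pos ∨ -β ∈ Pos)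
    (hnb : ∀ β ∈ Pos, -β ∉ Pos)
    {w : V ≃ₗ[ℝ] V} (hw : w ∈ weylGroup Φ)
    {M : Type*} [AddCommMonoid M] (f g : V → M)
    (hfg : ∀ β ∈ Pos, w β ∈ Pos → f β = g (w β))
    (hfg' : ∀ β ∈ Pos, w β ∉ Pos → f β = g (-(w β))) :
    ∑ β ∈ Pos, f β = ∑ γ ∈ Pos, g γ := by
  classical
  refine Finset.sum_nbij' (fun β => if w β ∈ Pos then w β else -(w β))
    (fun γ => if w.symm γ ∈ Pos then w.symm γ else -(w.symm γ)) ?_ ?_ ?_ ?_ ?_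
  · intro β hβ
    by_cases h : w β ∈ Pos
    · rw [if_pos h]; exact h
    · rw [if_neg h]
      exact (hdi _ (weyl_mem hΦ hw (hPosΦ _ hβ))).resolve_left h
  · intro γ hγ
    by_cases h : w.symm γ ∈ Pos
    · rw [if_pos h]; exact h
    · rw [if_neg h]
      exact (hdi _ (weyl_symm_mem hΦ hw (hPosΦ _ hγ))).resolve_left h
  · intro β hβ
    by_cases h : w β ∈ Pos
    · rw [if_pos h, w.symm_apply_apply, if_pos hβ]
    · rw [if_neg h]
      have h2 : w.symm (-(w β)) = -β := by rw [map_neg, w.symm_apply_apply]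
      rw [h2, if_neg (hnb _ hβ), neg_neg]
  · intro γ hγ
    by_cases h : w.symm γ ∈ Pos
    · rw [if_pos h, w.apply_symm_apply, if_pos hγ]
    · rw [if_neg h]
      have h2 : w (-(w.symm γ)) = -γ := by rw [map_neg, w.apply_symm_apply]
      rw [h2, if_neg (hnb _ hγ), neg_neg]
  · intro β hβ
    by_cases h : w β ∈ Pos
    · rw [if_pos h]; exact hfg _ hβ h
    · rw [if_neg h]; exact hfg' _ hβ h

end MyAux

/-- **Definition 4.3 / Corollary of Proposition 4.6**: the standard Φ-permutohedron
`Σ_{α ∈ Φ⁺} [−α/2, α/2]` equals the convex hull of the `W`-orbit of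
`ρ = (1/2) Σ_{α ∈ Φ⁺} α`. -/
theorem permutohedron_eq_orbit_of_rho
    {V : Type*} [NormedAddCommGroup V] [InnerProductSpace ℝ V] [FiniteDimensional ℝ V]
    {Φ : Set V} (hΦ : IsRootSystem Φ) {d : ℕ} {a : Fin d → V} (ha : IsSimpleSystem Φ a)
    (Pos : Finset V)
    (hPos : (Pos : Set V) =
      {β ∈ Φ | ∃ c : Fin d → ℝ, (∀ i, 0 ≤ c i) ∧ β = ∑ i, c i • a i}) :
    ∑ β ∈ Pos, segment ℝ (-((2 : ℝ)⁻¹ • β)) ((2 : ℝ)⁻¹ • β) =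
      convexHull ℝ {y | ∃ w ∈ weylGroup Φ, y = w ((2 : ℝ)⁻¹ • ∑ β ∈ Pos, β)} := by
  classical
  set ρ : V := (2 : ℝ)⁻¹ • ∑ β ∈ Pos, β with hρ
  set O : Set V := {y | ∃ w ∈ weylGroup Φ, y = w ρ} with hO
  -- basic membership facts
  have hPosMem : ∀ {β : V}, β ∈ Pos ↔
      β ∈ Φ ∧ ∃ c : Fin d → ℝ, (∀ i, 0 ≤ c i) ∧ β = ∑ i, c i • a i := by
    intro β
    rw [← Finset.mem_coe, hPos]
    exact Set.mem_sep_iff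
  have hPosΦ : ∀ β ∈ Pos, β ∈ Φ := fun β h => (hPosMem.mp h).1
  have hcoeff : ∀ {c c' : Fin d → ℝ}, (∑ i, c i • a i) = (∑ i, c' i • a i) → c = c' := by
    intro c c' h
    have h0 : ∑ i, (c - c') i • a i = 0 := by
      simp only [Pi.sub_apply, sub_smul, Finset.sum_sub_distrib, h, sub_self]
    have hz := Fintype.linearIndependent_iff.mp ha.indep (c - c') h0
    funext i
    have := hz i
    simp only [Pi.sub_apply, sub_eq_zero] at this
    exact this
  have hneg : ∀ β ∈ Φ, -β ∈ Φ := by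
    intro β hβ
    have hβ0 : ⟪β, β⟫ ≠ 0 := inner_self_ne_zero.mpr (hΦ.ne_zero β hβ)
    rw [← hΦ.refl_maps β hβ]
    exact ⟨β, hβ, reflFormula_self β hβ0⟩
  have hdi : ∀ β ∈ Φ, β ∈ Pos ∨ -β ∈ Pos := by
    intro β hβ
    obtain ⟨c, hc | hc, hrep⟩ := ha.sign β hβ
    · exact Or.inl (hPosMem.mpr ⟨hβ, c, hc, hrep⟩)
    · refine Or.inr (hPosMem.mpr ⟨hneg β hβ, fun i => -c i,
        fun i => neg_nonneg.mpr (hc i), ?_⟩)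
      rw [hrep, ← Finset.sum_neg_distrib]
      exact Finset.sum_congr rfl fun i _ => (neg_smul (c i) (a i)).symm
  have hnb : ∀ β ∈ Pos, -β ∉ Pos := by
    intro β h1 h2
    obtain ⟨hβΦ, c, hc, hrep⟩ := hPosMem.mp h1
    obtain ⟨_, c', hc', hrep'⟩ := hPosMem.mp h2
    have hz : ∑ i, (c + c') i • a i = ∑ i, (fun _ => (0 : ℝ)) i • a i := by
      simp only [Pi.add_apply, add_smul, Finset.sum_add_distrib, zero_smul,
        Finset.sum_const_zero]
      rw [← hrep, ← hrep']
      abel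
    have hcc := hcoeff hz
    have hβ0 : β = 0 := by
      rw [hrep]
      apply Finset.sum_eq_zero
      intro i _
      have hci := congrFun hcc i
      simp only [Pi.add_apply] at hci
      have h1i := hc i
      have h2i := hc' i
      have : c i = 0 := by linarith
      rw [this, zero_smul]
    exact hΦ.ne_zero β hβΦ hβ0
  have hsimple : ∀ i, a i ∈ Pos := by
    intro i
    refine hPosMem.mpr ⟨ha.mem i, fun j => if j = i then 1 else 0, fun j => ?_, ?_⟩
    · dsimp only
      split <;> norm_num
    · simp [ite_smul]
  -- reflections in simple roots permute the other positive roots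
  have hreflPos : ∀ (i : Fin d), ∀ β ∈ Pos, β ≠ a i →
      reflFormula (a i) β ∈ Pos ∧ reflFormula (a i) β ≠ a i := by
    intro i β hβ hne
    have haiΦ := ha.mem i
    have hai0 : ⟪a i, a i⟫ ≠ 0 := inner_self_ne_zero.mpr (hΦ.ne_zero _ haiΦ)
    obtain ⟨hβΦ, c, hc, hrep⟩ := hPosMem.mp hβ
    have hγΦ : reflFormula (a i) β ∈ Φ := by
      rw [← hΦ.refl_maps (a i) haiΦ]
      exact ⟨β, hβΦ, rfl⟩
    set k : ℝ := (2 * ⟪β, a i⟫) / ⟪a i, a i⟫ with hk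
    have hγrep : reflFormula (a i) β = ∑ j, (fun j => if j = i then c i - k else c j) j • a j := by
      have hterm : ∀ j ∈ Finset.univ, (fun j => if j = i then c i - k else c j) j • a j
          = c j • a j + (if j = i then -k else 0) • a j := by
        intro j _
        dsimp only
        by_cases hj : j = i
        · subst hj
          rw [if_pos rfl, if_pos rfl, sub_smul, neg_smul, sub_eq_add_neg]
        · rw [if_neg hj, if_neg hj, zero_smul, add_zero]
      rw [Finset.sum_congr rfl hterm, Finset.sum_add_distrib]
      have h2 : ∑ j, (if j = i then -k else (0 : ℝ)) • a j = -(k • a i) := by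
        simp [ite_smul]
      rw [h2, ← hrep, ← sub_eq_add_neg]
      rfl
    obtain ⟨c'', hsgn, hrep''⟩ := ha.sign _ hγΦ
    have hcc : c'' = fun j => if j = i then c i - k else c j :=
      hcoeff (hrep''.symm.trans hγrep)
    rcases hsgn with hpos | hnegc
    · have hγPos : reflFormula (a i) β ∈ Pos := hPosMem.mpr ⟨hγΦ, c'', hpos, hrep''⟩
      refine ⟨hγPos, ?_⟩
      intro hEq
      have hβeq : β = -(a i) := by
        have h3 : reflFormula (a i) (reflFormula (a i) β) = β :=
          reflFormula_involutive _ hai0 β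
        rw [hEq, reflFormula_self _ hai0] at h3
        exact h3.symm
      rw [hβeq] at hβ
      exact hnb _ (hsimple i) hβ
    · exfalso
      have hcj : ∀ j, j ≠ i → c j = 0 := by
        intro j hj
        have h1 : c'' j ≤ 0 := hnegc j
        have h2 : c'' j = c j := by rw [hcc]; simp [hj]
        have h3 := hc j
        linarith [h2 ▸ h1]
      have hβrep : β = c i • a i := by
        rw [hrep]
        exact Finset.sum_eq_single i (fun j _ hj => by rw [hcj j hj, zero_smul])
          (fun h => absurd (Finset.mem_univ i) h)
      rcases hΦ.smul_mem (a i) haiΦ (c i) (hβrep ▸ hβΦ) with h1 | h1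
      · exact hne (by rw [hβrep, h1, one_smul])
      · have := hc i
        rw [h1] at this
        linarith
  -- sum of the reflected positive roots
  have hsumrefl : ∀ i : Fin d,
      ∑ β ∈ Pos, reflFormula (a i) β = (∑ β ∈ Pos, β) - a i - a i := by
    intro i
    have hai0 : ⟪a i, a i⟫ ≠ 0 := inner_self_ne_zero.mpr (hΦ.ne_zero _ (ha.mem i))
    have hbij : ∑ β ∈ Pos.erase (a i), reflFormula (a i) β = ∑ β ∈ Pos.erase (a i), β := by
      refine Finset.sum_nbij' (fun β => reflFormula (a i) β) (fun β => reflFormula (a i) β)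
        ?_ ?_ ?_ ?_ ?_
      · intro β hβ
        obtain ⟨hne, hmem⟩ := Finset.mem_erase.mp hβ
        obtain ⟨h1, h2⟩ := hreflPos i β hmem hne
        exact Finset.mem_erase.mpr ⟨h2, h1⟩
      · intro β hβ
        obtain ⟨hne, hmem⟩ := Finset.mem_erase.mp hβ
        obtain ⟨h1, h2⟩ := hreflPos i β hmem hne
        exact Finset.mem_erase.mpr ⟨h2, h1⟩
      · intro β _
        exact reflFormula_involutive _ hai0 β
      · intro β _
        exact reflFormula_involutive _ hai0 β
      · intro β _
        rfl
    rw [← Finset.add_sum_erase Pos (fun β => reflFormula (a i) β) (hsimple i),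
      ← Finset.add_sum_erase Pos (fun β => β) (hsimple i), hbij, reflFormula_self _ hai0]
    abel
  -- key description of the orbit points
  have hkey : ∀ w : V ≃ₗ[ℝ] V, w ∈ weylGroup Φ →
      w ρ = ∑ γ ∈ Pos, (if w.symm γ ∈ Pos then (2 : ℝ)⁻¹ • γ else -((2 : ℝ)⁻¹ • γ)) := by
    intro w hw
    have h1 : w ρ = ∑ β ∈ Pos, (2 : ℝ)⁻¹ • w β := by
      rw [hρ, map_smul, map_sum, Finset.smul_sum]
    rw [h1]
    refine sum_reweyl hΦ Pos hPosΦ hdi hnb hw _ _ ?_ ?_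
    · intro β hβ h
      rw [w.symm_apply_apply, if_pos hβ]
    · intro β hβ h
      have h2 : w.symm (-(w β)) = -β := by rw [map_neg, w.symm_apply_apply]
      rw [h2, if_neg (hnb _ hβ), smul_neg, neg_neg]
  -- orbit is contained in the zonotope
  have hOsub : O ⊆ ∑ β ∈ Pos, segment ℝ (-((2 : ℝ)⁻¹ • β)) ((2 : ℝ)⁻¹ • β) := by
    rintro y ⟨w, hw, rfl⟩
    rw [Set.mem_finset_sum]
    refine ⟨fun γ => if w.symm γ ∈ Pos then (2 : ℝ)⁻¹ • γ else -((2 : ℝ)⁻¹ • γ),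
      fun {γ} hγ => ?_, (hkey w hw).symm⟩
    dsimp only
    by_cases h : w.symm γ ∈ Pos
    · rw [if_pos h]; exact right_mem_segment ℝ _ _
    · rw [if_neg h]; exact left_mem_segment ℝ _ _
  have hconv_sub : convexHull ℝ O ⊆ ∑ β ∈ Pos, segment ℝ (-((2 : ℝ)⁻¹ • β)) ((2 : ℝ)⁻¹ • β) :=
    convexHull_min hOsub (convex_sum _ (fun β _ => convex_segment _ _))
  refine Set.Subset.antisymm ?_ hconv_sub
  intro x hx
  by_contra hxO
  -- the orbit is finite
  have hOfin : O.Finite := by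
    apply Set.Finite.subset (Finset.finite_toSet (Finset.image
      (fun S : Finset V => ∑ γ ∈ Pos, (if γ ∈ S then ((2 : ℝ)⁻¹ • γ) else -((2 : ℝ)⁻¹ • γ)))
      Pos.powerset))
    rintro y ⟨w, hw, rfl⟩
    rw [Finset.mem_coe, Finset.mem_image]
    refine ⟨Pos.filter (fun γ => w.symm γ ∈ Pos),
      Finset.mem_powerset.mpr (Finset.filter_subset _ _), ?_⟩
    rw [hkey w hw]
    refine Finset.sum_congr rfl fun γ hγ => ?_
    by_cases h : w.symm γ ∈ Pos <;> simp [Finset.mem_filter, hγ, h]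
  have hclosed : IsClosed (convexHull ℝ O) := hOfin.isClosed_convexHull (𝕜 := ℝ)
  obtain ⟨f, u, hfu, hux⟩ :=
    geometric_hahn_banach_closed_point (convex_convexHull ℝ O) hclosed hxO
  -- a maximizer of f on the orbit
  have hρO : ρ ∈ O := ⟨1, one_mem _, rfl⟩
  obtain ⟨y₀, hy₀, hmax⟩ := Finset.exists_max_image hOfin.toFinset f
    ⟨ρ, hOfin.mem_toFinset.mpr hρO⟩
  obtain ⟨w₀, hw₀, hy₀eq⟩ := hOfin.mem_toFinset.mp hy₀
  subst hy₀eq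
  have hmax' : ∀ y ∈ O, f y ≤ f (w₀ ρ) := fun y hy => hmax y (hOfin.mem_toFinset.mpr hy)
  -- f is nonnegative on w₀ of the simple roots
  have hsimple_nonneg : ∀ i : Fin d, 0 ≤ f (w₀ (a i)) := by
    intro i
    have hai0 : ⟪a i, a i⟫ ≠ 0 := inner_self_ne_zero.mpr (hΦ.ne_zero _ (ha.mem i))
    have hsi : reflEquiv (a i) hai0 ∈ weylGroup Φ := reflEquiv_mem (ha.mem i) hai0
    have hmem : (w₀ * reflEquiv (a i) hai0) ρ ∈ O := ⟨_, mul_mem hw₀ hsi, rfl⟩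
    have hle := hmax' _ hmem
    have hsiρ : reflEquiv (a i) hai0 ρ = ρ - (2 : ℝ)⁻¹ • a i - (2 : ℝ)⁻¹ • a i := by
      rw [reflEquiv_apply]
      have h1 : reflFormula (a i) ρ = (2 : ℝ)⁻¹ • ∑ β ∈ Pos, reflFormula (a i) β := by
        show reflLin (a i) ρ = _
        rw [hρ, map_smul, map_sum]
        rfl
      rw [h1, hsumrefl i, smul_sub, smul_sub, ← hρ]
    have hval : f ((w₀ * reflEquiv (a i) hai0) ρ)
        = f (w₀ ρ) - (2 : ℝ)⁻¹ * f (w₀ (a i)) - (2 : ℝ)⁻¹ * f (w₀ (a i)) := by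
      show f (w₀ (reflEquiv (a i) hai0 ρ)) = _
      rw [hsiρ]
      simp only [map_sub, map_smul, smul_eq_mul]
    rw [hval] at hle
    linarith
  -- f is nonnegative on w₀ of all positive roots
  have hposall : ∀ β ∈ Pos, 0 ≤ f (w₀ β) := by
    intro β hβ
    obtain ⟨hβΦ, c, hc, hrep⟩ := hPosMem.mp hβ
    have hval : f (w₀ β) = ∑ i, c i * f (w₀ (a i)) := by
      rw [hrep, map_sum, map_sum]
      simp only [map_smul, smul_eq_mul]
    rw [hval]
    exact Finset.sum_nonneg fun i _ => mul_nonneg (hc i) (hsimple_nonneg i)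
  -- the value of f at the maximizing orbit point
  have hfval : f (w₀ ρ) = (2 : ℝ)⁻¹ * ∑ γ ∈ Pos, |f γ| := by
    have h1 : f (w₀ ρ) = ∑ β ∈ Pos, (2 : ℝ)⁻¹ * f (w₀ β) := by
      have h0 : w₀ ρ = ∑ β ∈ Pos, (2 : ℝ)⁻¹ • w₀ β := by
        rw [hρ, map_smul, map_sum, Finset.smul_sum]
      rw [h0, map_sum]
      simp only [map_smul, smul_eq_mul]
    have h2 : ∀ β ∈ Pos, (2 : ℝ)⁻¹ * f (w₀ β) = (2 : ℝ)⁻¹ * |f (w₀ β)| := by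
      intro β hβ
      rw [abs_of_nonneg (hposall β hβ)]
    have h3 : ∑ β ∈ Pos, |f (w₀ β)| = ∑ γ ∈ Pos, |f γ| := by
      refine sum_reweyl hΦ Pos hPosΦ hdi hnb hw₀ _ _ (fun β hβ h => rfl) ?_
      intro β hβ h
      rw [map_neg, abs_neg]
    rw [h1, Finset.sum_congr rfl h2, ← Finset.mul_sum, h3]
  -- bound the value of f at x
  rw [Set.mem_finset_sum] at hx
  obtain ⟨g, hg, hgsum⟩ := hx
  have hfx : f x = ∑ γ ∈ Pos, f (g γ) := by rw [← hgsum, map_sum]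
  have hterm : ∀ γ ∈ Pos, f (g γ) ≤ (2 : ℝ)⁻¹ * |f γ| := by
    intro γ hγ
    obtain ⟨p, q, hp, hq, hpq, hrep⟩ := hg hγ
    rw [← hrep]
    have hval : f (p • -((2 : ℝ)⁻¹ • γ) + q • ((2 : ℝ)⁻¹ • γ))
        = (q - p) * ((2 : ℝ)⁻¹ * f γ) := by
      simp only [map_add, map_smul, map_neg, smul_eq_mul]
      ring
    rw [hval]
    have hc : (2 : ℝ)⁻¹ * |f γ| = |(2 : ℝ)⁻¹ * f γ| := by
      rw [abs_mul, abs_of_nonneg (by norm_num : (0:ℝ) ≤ (2:ℝ)⁻¹)]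
    rw [hc]
    calc (q - p) * ((2 : ℝ)⁻¹ * f γ) ≤ |(q - p) * ((2 : ℝ)⁻¹ * f γ)| := le_abs_self _
      _ = |q - p| * |(2 : ℝ)⁻¹ * f γ| := abs_mul _ _
      _ ≤ 1 * |(2 : ℝ)⁻¹ * f γ| :=
          mul_le_mul_of_nonneg_right (abs_le.mpr ⟨by linarith, by linarith⟩) (abs_nonneg _)
      _ = |(2 : ℝ)⁻¹ * f γ| := one_mul _
  have hsum_le : f x ≤ (2 : ℝ)⁻¹ * ∑ γ ∈ Pos, |f γ| := by
    rw [hfx, Finset.mul_sum]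
    exact Finset.sum_le_sum hterm
  have hlt : f (w₀ ρ) < u := hfu _ (subset_convexHull ℝ O ⟨w₀, hw₀, rfl⟩)
  rw [hfval] at hlt
  linarith
end

section
/- (Type D claim of Section 5.2: disubmodularity equals bisubmodularity of h) Let d ≥ 4. Let f be a real-valued function on signed subsets of [d] of size at most d−2 with f(∅) = 0, and let g be a real-valued function on signed subsets of [d] of size exactly d. Define h on all signed subsets of [d] by: h(X) = f(X) if |X| ≤ d−2; h(X) = g(Xa) + g(X(−a)) if |X| = d−1, where a is the unique element of [d] with a, −a ∉ X; and h(X) = 2g(X) if |X| = d. Then the pair (f,g) satisfies the local D_d-submodular inequalities — namely (i) f(Xa) + f(Xb) ≥ f(X) + f(Xab) for |X| ≤ d−4 and admissible {a,b} disjoint from ±X; (ii) f(Xa) + f(Xb) ≥ f(X) + g(Xabc) + g(Xab(−c)) for |X| = d−3 and admissible {a,b,c} disjoint from ±X; (iii) g(Xab) + g(X(−a)(−b)) ≥ f(X) for |X| = d−2 and admissible {a,b} disjoint from ±X — if and only if h is bisubmodular: h(X) + h(Y) ≥ h(X ⊓ Y) + h(X ⊔ Y) for all signed subsets X, Y of [d].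 -/
/-!
On signed subsets of size at most `d − 2` the function `h` is `f`, and on the two top levels it is
built from `g` so that each local inequality for `h` is one of (i)–(iii) or an identity. Hence
everything reduces to the local characterization of bisubmodularity: `h` is bisubmodular iff it
satisfies the square inequalities `h(Xa) + h(Xb) ≥ h(X) + h(Xab)` (`b ≠ ±a`) and the opposite
inequalities `h(Xa) + h(X(−a)) ≥ 2 h(X)`. For the nontrivial direction, the square inequalities
give diminishing returns along signed inclusion, which settles pairs `X, Y` without conflicting
elements exactly as for submodular functions; a conflict `a ∈ X, −a ∈ Y` is removed using the
exchange inequality `h(Za) + h(W(−a)) ≥ h(Z) + h(W)` for conflict-free `Z, W`, obtained by passing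
through `Z ∪ W`. In the type `D` setting the opposite inequalities need not be assumed: they
follow from the square ones by downward induction on `|X|`, starting at `|X| = d − 1`, where they
hold with equality by the definition of `h`.
-/

/-- A signed subset of `[d]` is a pair `X = (X⁺, X⁻)` of disjoint subsets of `[d]`.
`adjS X a ε` adjoins the signed element `a` (with sign `ε`: `true` = positive,
`false` = negative) to the signed subset `X`. -/
def adjS {d : ℕ} (X : Finset (Fin d) × Finset (Fin d)) (a : Fin d) (ε : Bool) :
    Finset (Fin d) × Finset (Fin d) :=
  if ε then (insert a X.1, X.2) else (X.1, insert a X.2)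

namespace SignedSubset

variable {d : ℕ} {X Y Z W : Finset (Fin d) × Finset (Fin d)} {a b : Fin d} {ε : Bool}

/-- The paper's `X ⊔ Y`; its `X ⊓ Y` is the infimum `X ⊓ Y` for the product order on pairs, and
that order is signed inclusion. -/
def join (X Y : Finset (Fin d) × Finset (Fin d)) : Finset (Fin d) × Finset (Fin d) :=
  ((X.1 ∪ Y.1) \ (X.2 ∪ Y.2), (X.2 ∪ Y.2) \ (X.1 ∪ Y.1))

def Compatible (X Y : Finset (Fin d) × Finset (Fin d)) : Prop :=
  Disjoint X.1 Y.2 ∧ Disjoint X.2 Y.1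

theorem adjS_comm (X : Finset (Fin d) × Finset (Fin d)) (a b : Fin d) (εa εb : Bool) :
    adjS (adjS X a εa) b εb = adjS (adjS X b εb) a εa := by
  cases εa <;> cases εb <;> simp [adjS, Finset.insert_comm]

theorem notMem_adjS_iff :
    b ∉ (adjS X a ε).1 ∪ (adjS X a ε).2 ↔ b ≠ a ∧ b ∉ X.1 ∪ X.2 := by
  cases ε <;> simp [adjS]

theorem card_adjS (ha : a ∉ X.1 ∪ X.2) :
    (adjS X a ε).1.card + (adjS X a ε).2.card = X.1.card + X.2.card + 1 := by
  rw [Finset.mem_union, not_or] at ha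
  cases ε <;> simp [adjS, Finset.card_insert_of_notMem, ha.1, ha.2] <;> omega

theorem disjoint_adjS (hX : Disjoint X.1 X.2) (ha : a ∉ X.1 ∪ X.2) :
    Disjoint (adjS X a ε).1 (adjS X a ε).2 := by
  rw [Finset.mem_union, not_or] at ha
  cases ε <;> simp [adjS, ha.1, ha.2, hX]

theorem le_adjS : X ≤ adjS X a ε := by
  cases ε <;> simp [adjS, Prod.le_def, Finset.subset_insert]

theorem le_of_le_adjS (h : Z ≤ adjS W a ε) (ha : a ∉ Z.1 ∪ Z.2) : Z ≤ W := by
  rw [Finset.mem_union, not_or] at ha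
  cases ε <;> simp_all [adjS, Prod.le_def, Finset.subset_insert_iff_of_notMem]

theorem card_add_one_le (hX : Disjoint X.1 X.2) (ha : a ∉ X.1 ∪ X.2) :
    X.1.card + X.2.card + 1 ≤ d := by
  rw [← Finset.card_union_of_disjoint hX, ← Finset.card_insert_of_notMem ha]
  simpa using Finset.card_le_univ (insert a (X.1 ∪ X.2))

theorem exists_notMem (hX : Disjoint X.1 X.2) (h : X.1.card + X.2.card < d) :
    ∃ a, a ∉ X.1 ∪ X.2 := by
  rw [← Finset.card_union_of_disjoint hX] at h
  by_contra! hall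
  simp [Finset.eq_univ_of_forall hall] at h

theorem exists_eq_adjS_true (hY : Disjoint Y.1 Y.2) (ha : a ∈ Y.1) :
    ∃ Y₀, Disjoint Y₀.1 Y₀.2 ∧ a ∉ Y₀.1 ∪ Y₀.2 ∧ Y = adjS Y₀ a true :=
  ⟨(Y.1.erase a, Y.2), hY.mono_left (Finset.erase_subset a Y.1),
    by simp [Finset.disjoint_left.1 hY ha], by simp [adjS, Finset.insert_erase ha]⟩

theorem exists_eq_adjS_false (hY : Disjoint Y.1 Y.2) (ha : a ∈ Y.2) :
    ∃ Y₀, Disjoint Y₀.1 Y₀.2 ∧ a ∉ Y₀.1 ∪ Y₀.2 ∧ Y = adjS Y₀ a false :=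
  ⟨(Y.1, Y.2.erase a), hY.mono_right (Finset.erase_subset a Y.2),
    by simp [Finset.disjoint_right.1 hY ha], by simp [adjS, Finset.insert_erase ha]⟩

theorem exists_eq_adjS (hY : Disjoint Y.1 Y.2) (ha : a ∈ Y.1 ∪ Y.2) :
    ∃ ε Y₀, Disjoint Y₀.1 Y₀.2 ∧ a ∉ Y₀.1 ∪ Y₀.2 ∧ Y = adjS Y₀ a ε := by
  rcases Finset.mem_union.1 ha with ha | ha
  · exact ⟨true, exists_eq_adjS_true hY ha⟩
  · exact ⟨false, exists_eq_adjS_false hY ha⟩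

theorem join_comm (X Y : Finset (Fin d) × Finset (Fin d)) : join X Y = join Y X := by
  simp [join, Finset.union_comm]

theorem join_self (hX : Disjoint X.1 X.2) : join X X = X := by
  simp [join, Finset.sdiff_eq_self_of_disjoint hX, Finset.sdiff_eq_self_of_disjoint hX.symm]

theorem disjoint_join : Disjoint (join X Y).1 (join X Y).2 :=
  disjoint_sdiff_sdiff

theorem notMem_join (hX : a ∉ X.1 ∪ X.2) (hY : a ∉ Y.1 ∪ Y.2) :
    a ∉ (join X Y).1 ∪ (join X Y).2 := by
  simp only [Finset.mem_union, not_or] at hX hY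
  simp [join, hX, hY]

theorem compatible_join : Compatible (join X Y) Y :=
  ⟨Finset.disjoint_left.2 fun _ hx hY => (Finset.mem_sdiff.1 hx).2 (Finset.mem_union_right _ hY),
    Finset.disjoint_left.2 fun _ hx hY => (Finset.mem_sdiff.1 hx).2 (Finset.mem_union_right _ hY)⟩

theorem Compatible.mono_right (h : Compatible X Y) (hZY : Z ≤ Y) : Compatible X Z :=
  ⟨h.1.mono_right hZY.2, h.2.mono_right hZY.1⟩

theorem compatible_of_le (hW : Disjoint W.1 W.2) (h : Z ≤ W) : Compatible Z W :=
  ⟨hW.mono_left h.1, hW.symm.mono_left h.2⟩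

theorem disjoint_sup (hX : Disjoint X.1 X.2) (hY : Disjoint Y.1 Y.2) (h : Compatible X Y) :
    Disjoint (X ⊔ Y).1 (X ⊔ Y).2 := by
  simp [Finset.disjoint_union_left, Finset.disjoint_union_right, hX, hY, h.1, h.2.symm]

theorem join_eq_sup (hX : Disjoint X.1 X.2) (hY : Disjoint Y.1 Y.2) (h : Compatible X Y) :
    join X Y = X ⊔ Y := by
  have := disjoint_sup hX hY h
  simp only [Prod.fst_sup, Prod.snd_sup, Finset.sup_eq_union] at this
  simp only [join, Finset.sdiff_eq_self_of_disjoint this,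
    Finset.sdiff_eq_self_of_disjoint this.symm]
  rfl

theorem exists_mem_notMem_of_not_le (h : Compatible X Y) (hYX : ¬ Y ≤ X) :
    ∃ a ∈ Y.1 ∪ Y.2, a ∉ X.1 ∪ X.2 := by
  simp only [Prod.le_def, Finset.not_subset, not_and_or] at hYX
  rcases hYX with ⟨a, hY, hX⟩ | ⟨a, hY, hX⟩
  · exact ⟨a, by simp [hY], by simp [hX, Finset.disjoint_right.1 h.2 hY]⟩
  · exact ⟨a, by simp [hY], by simp [hX, Finset.disjoint_right.1 h.1 hY]⟩

theorem adjS_inf (ha : a ∉ Y.1 ∪ Y.2) : adjS X a ε ⊓ Y = X ⊓ Y := by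
  rw [Finset.mem_union, not_or] at ha
  cases ε <;> simp [adjS, Prod.ext_iff, Finset.insert_inter_of_notMem, ha.1, ha.2]

theorem inf_adjS (ha : a ∉ X.1 ∪ X.2) : X ⊓ adjS Y a ε = X ⊓ Y := by
  rw [inf_comm, adjS_inf ha, inf_comm]

theorem adjS_inf_adjS_not (hX : a ∉ X.1 ∪ X.2) (hY : a ∉ Y.1 ∪ Y.2) :
    adjS X a ε ⊓ adjS Y a (!ε) = X ⊓ Y := by
  simp only [Finset.mem_union, not_or] at hX hY
  cases ε <;> simp [adjS, Prod.ext_iff, Finset.insert_inter_of_notMem,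
    Finset.inter_insert_of_notMem, hX, hY]

theorem join_adjS (hX : a ∉ X.1 ∪ X.2) (hY : a ∉ Y.1 ∪ Y.2) :
    join (adjS X a ε) Y = adjS (join X Y) a ε := by
  simp only [Finset.mem_union, not_or] at hX hY
  cases ε <;> simp only [adjS, join, Prod.ext_iff, Finset.ext_iff] <;> simp <;> grind

theorem join_adjS_adjS_not (hX : a ∉ X.1 ∪ X.2) (hY : a ∉ Y.1 ∪ Y.2) :
    join (adjS X a ε) (adjS Y a (!ε)) = join X Y := by
  simp only [Finset.mem_union, not_or] at hX hY
  cases ε <;> simp only [adjS, join, Prod.ext_iff, Finset.ext_iff] <;> simp <;> grind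

theorem join_adjS_right (hX : a ∉ X.1 ∪ X.2) (hY : a ∉ Y.1 ∪ Y.2) :
    join X (adjS Y a ε) = adjS (join X Y) a ε := by
  rw [join_comm, join_adjS hY hX, join_comm]

theorem adjS_inf_adjS (ha : a ∉ X.1 ∪ X.2) (hb : b ∉ X.1 ∪ X.2) (hab : a ≠ b) (εa εb : Bool) :
    adjS X a εa ⊓ adjS X b εb = X := by
  rw [adjS_inf (notMem_adjS_iff.2 ⟨hab, ha⟩), inf_adjS hb, inf_idem]

theorem join_adjS_adjS (hX : Disjoint X.1 X.2) (ha : a ∉ X.1 ∪ X.2) (hb : b ∉ X.1 ∪ X.2)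
    (hab : a ≠ b) (εa εb : Bool) :
    join (adjS X a εa) (adjS X b εb) = adjS (adjS X a εa) b εb := by
  rw [join_adjS ha (notMem_adjS_iff.2 ⟨hab, ha⟩), join_adjS_right hb hb, join_self hX,
    adjS_comm]

theorem exists_eq_adjS_of_not_compatible (hX : Disjoint X.1 X.2) (hY : Disjoint Y.1 Y.2)
    (h : ¬ Compatible X Y) :
    ∃ a ε X₀ Y₀, Disjoint X₀.1 X₀.2 ∧ Disjoint Y₀.1 Y₀.2 ∧ a ∉ X₀.1 ∪ X₀.2 ∧
      a ∉ Y₀.1 ∪ Y₀.2 ∧ X = adjS X₀ a ε ∧ Y = adjS Y₀ a (!ε) := by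
  simp only [Compatible, not_and_or, Finset.not_disjoint_iff] at h
  rcases h with ⟨a, haX, haY⟩ | ⟨a, haX, haY⟩
  · obtain ⟨X₀, hX₀, haX₀, rfl⟩ := exists_eq_adjS_true hX haX
    obtain ⟨Y₀, hY₀, haY₀, rfl⟩ := exists_eq_adjS_false hY haY
    exact ⟨a, true, X₀, Y₀, hX₀, hY₀, haX₀, haY₀, rfl, rfl⟩
  · obtain ⟨X₀, hX₀, haX₀, rfl⟩ := exists_eq_adjS_false hX haX
    obtain ⟨Y₀, hY₀, haY₀, rfl⟩ := exists_eq_adjS_true hY haY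
    exact ⟨a, false, X₀, Y₀, hX₀, hY₀, haX₀, haY₀, rfl, rfl⟩

variable {h : Finset (Fin d) × Finset (Fin d) → ℝ}

def IsSquareSubmodular (h : Finset (Fin d) × Finset (Fin d) → ℝ) : Prop :=
  ∀ X : Finset (Fin d) × Finset (Fin d), Disjoint X.1 X.2 → ∀ a b : Fin d, ∀ εa εb : Bool,
    a ∉ X.1 ∪ X.2 → b ∉ X.1 ∪ X.2 → a ≠ b →
      h (adjS X a εa) + h (adjS X b εb) ≥ h X + h (adjS (adjS X a εa) b εb)

def IsOppositeSubmodular (h : Finset (Fin d) × Finset (Fin d) → ℝ) : Prop :=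
  ∀ X : Finset (Fin d) × Finset (Fin d), Disjoint X.1 X.2 → ∀ a : Fin d, a ∉ X.1 ∪ X.2 →
    h (adjS X a true) + h (adjS X a false) ≥ 2 * h X

def IsBisubmodular (h : Finset (Fin d) × Finset (Fin d) → ℝ) : Prop :=
  ∀ X Y : Finset (Fin d) × Finset (Fin d), Disjoint X.1 X.2 → Disjoint Y.1 Y.2 →
    h X + h Y ≥ h (X ⊓ Y) + h (join X Y)

theorem IsSquareSubmodular.diminishing_returns (hsq : IsSquareSubmodular h)
    {Z W : Finset (Fin d) × Finset (Fin d)} (hW : Disjoint W.1 W.2) (hZW : Z ≤ W)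
    (ha : a ∉ W.1 ∪ W.2) (ε : Bool) :
    h W + h (adjS Z a ε) ≥ h Z + h (adjS W a ε) := by
  by_cases hWZ : W ≤ Z
  · rw [le_antisymm hZW hWZ]
  obtain ⟨b, hbW, hbZ⟩ := exists_mem_notMem_of_not_le (compatible_of_le hW hZW) hWZ
  obtain ⟨εb, W₀, hW₀, hbW₀, rfl⟩ := exists_eq_adjS hW hbW
  obtain ⟨hab, haW₀⟩ := notMem_adjS_iff.1 ha
  have IH := IsSquareSubmodular.diminishing_returns hsq hW₀ (le_of_le_adjS hZW hbZ) haW₀ ε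
  have := hsq W₀ hW₀ b a εb ε hbW₀ haW₀ hab.symm
  linarith
termination_by W.1.card + W.2.card
decreasing_by subst_vars; rw [card_adjS hbW₀]; omega

theorem IsSquareSubmodular.exchange (hsq : IsSquareSubmodular h) (hopp : IsOppositeSubmodular h)
    (hZ : Disjoint Z.1 Z.2) (hW : Disjoint W.1 W.2) (hZW : Compatible Z W)
    (hZa : a ∉ Z.1 ∪ Z.2) (hWa : a ∉ W.1 ∪ W.2) (ε : Bool) :
    h (adjS Z a ε) + h (adjS W a (!ε)) ≥ h Z + h W := by
  have hC := disjoint_sup hZ hW hZW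
  have haC : a ∉ (Z ⊔ W).1 ∪ (Z ⊔ W).2 := by simp_all
  have hZC := hsq.diminishing_returns hC le_sup_left haC ε
  have hWC := hsq.diminishing_returns hC le_sup_right haC (!ε)
  have hCC := hopp _ hC a haC
  cases ε <;> simp only [Bool.not_true, Bool.not_false] at hWC ⊢ <;> linarith

theorem IsSquareSubmodular.bisubmodular_of_compatible (hsq : IsSquareSubmodular h)
    {X Y : Finset (Fin d) × Finset (Fin d)} (hX : Disjoint X.1 X.2) (hY : Disjoint Y.1 Y.2)
    (hXY : Compatible X Y) :
    h X + h Y ≥ h (X ⊓ Y) + h (join X Y) := by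
  by_cases hYX : Y ≤ X
  · rw [inf_eq_right.2 hYX, join_eq_sup hX hY hXY, sup_eq_left.2 hYX, add_comm]
  obtain ⟨a, haY, haX⟩ := exists_mem_notMem_of_not_le hXY hYX
  obtain ⟨ε, Y₀, hY₀, haY₀, rfl⟩ := exists_eq_adjS hY haY
  have hXY₀ := hXY.mono_right le_adjS
  have IH := IsSquareSubmodular.bisubmodular_of_compatible hsq hX hY₀ hXY₀
  have hY₀J : Y₀ ≤ join X Y₀ := join_eq_sup hX hY₀ hXY₀ ▸ le_sup_right
  have := hsq.diminishing_returns disjoint_join hY₀J (notMem_join haX haY₀) ε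
  rw [inf_adjS haX, join_adjS_right haX haY₀]
  linarith
termination_by Y.1.card + Y.2.card
decreasing_by subst_vars; rw [card_adjS haY₀]; omega

theorem IsSquareSubmodular.bisubmodular (hsq : IsSquareSubmodular h)
    (hopp : IsOppositeSubmodular h) {X Y : Finset (Fin d) × Finset (Fin d)}
    (hX : Disjoint X.1 X.2) (hY : Disjoint Y.1 Y.2) :
    h X + h Y ≥ h (X ⊓ Y) + h (join X Y) := by
  by_cases hXY : Compatible X Y
  · exact hsq.bisubmodular_of_compatible hX hY hXY
  obtain ⟨a, ε, X₀, Y₀, hX₀, hY₀, haX₀, haY₀, rfl, rfl⟩ :=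
    exists_eq_adjS_of_not_compatible hX hY hXY
  have IH := IsSquareSubmodular.bisubmodular hsq hopp hX hY₀
  have := hsq.exchange hopp disjoint_join hY₀ compatible_join (notMem_join haX₀ haY₀) haY₀ ε
  rw [adjS_inf haY₀, join_adjS haX₀ haY₀] at IH
  rw [adjS_inf_adjS_not haX₀ haY₀, join_adjS_adjS_not haX₀ haY₀]
  linarith
termination_by Y.1.card + Y.2.card
decreasing_by subst_vars; rw [card_adjS haY₀]; omega

theorem IsSquareSubmodular.isOppositeSubmodular (hsq : IsSquareSubmodular h)
    (hbase : ∀ X : Finset (Fin d) × Finset (Fin d), Disjoint X.1 X.2 →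
      X.1.card + X.2.card + 1 = d → ∀ a : Fin d, a ∉ X.1 ∪ X.2 →
        h (adjS X a true) + h (adjS X a false) ≥ 2 * h X) :
    IsOppositeSubmodular h := by
  intro X hX a ha
  induction hk : d - (X.1.card + X.2.card + 1) generalizing X with
  | zero => exact hbase X hX (by have := card_add_one_le hX ha; omega) a ha
  | succ k ih =>
    -- with a second free element `b`, the square inequalities for `(±a, b)` reduce `X` to `Xb`
    have hXa := card_adjS (ε := true) ha
    obtain ⟨b, hb⟩ := exists_notMem (disjoint_adjS (ε := true) hX ha) (by omega)
    obtain ⟨hba, hbX⟩ := notMem_adjS_iff.1 hb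
    have IH := ih (adjS X b true) (disjoint_adjS hX hbX) (notMem_adjS_iff.2 ⟨hba.symm, ha⟩)
      (by rw [card_adjS hbX]; omega)
    have hpos := hsq X hX a b true true ha hbX hba.symm
    have hneg := hsq X hX a b false true ha hbX hba.symm
    rw [adjS_comm X b a, adjS_comm X b a] at IH
    linarith

theorem IsBisubmodular.isSquareSubmodular (hbi : IsBisubmodular h) : IsSquareSubmodular h := by
  intro X hX a b εa εb ha hb hab
  have := hbi _ _ (disjoint_adjS (ε := εa) hX ha) (disjoint_adjS (ε := εb) hX hb)
  rw [adjS_inf_adjS ha hb hab, join_adjS_adjS hX ha hb hab] at this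
  linarith

theorem IsBisubmodular.antipodal (hbi : IsBisubmodular h) (hX : Disjoint X.1 X.2)
    (ha : a ∉ X.1 ∪ X.2) (hb : b ∉ X.1 ∪ X.2) (hab : a ≠ b) (εa εb : Bool) :
    h (adjS (adjS X a εa) b εb) + h (adjS (adjS X a (!εa)) b (!εb)) ≥ 2 * h X := by
  have hbXa (ε : Bool) : b ∉ (adjS X a ε).1 ∪ (adjS X a ε).2 :=
    notMem_adjS_iff.2 ⟨hab.symm, hb⟩
  have := hbi (adjS (adjS X a εa) b εb) (adjS (adjS X a (!εa)) b (!εb))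
    (disjoint_adjS (disjoint_adjS hX ha) (hbXa εa))
    (disjoint_adjS (disjoint_adjS hX ha) (hbXa (!εa)))
  rw [adjS_inf_adjS_not (hbXa εa) (hbXa (!εa)), adjS_inf_adjS_not ha ha, inf_idem,
    join_adjS_adjS_not (hbXa εa) (hbXa (!εa)), join_adjS_adjS_not ha ha, join_self hX] at this
  linarith

section TypeD

variable {f g : Finset (Fin d) × Finset (Fin d) → ℝ}

structure IsTypeDExtension (f g h : Finset (Fin d) × Finset (Fin d) → ℝ) : Prop where
  eq_low : ∀ X : Finset (Fin d) × Finset (Fin d), Disjoint X.1 X.2 →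
    (X.1.card + X.2.card : ℤ) ≤ (d : ℤ) - 2 → h X = f X
  eq_mid : ∀ X : Finset (Fin d) × Finset (Fin d), Disjoint X.1 X.2 →
    X.1.card + X.2.card = d - 1 → ∀ a : Fin d, a ∉ X.1 ∪ X.2 →
      h X = g (adjS X a true) + g (adjS X a false)
  eq_top : ∀ X : Finset (Fin d) × Finset (Fin d), Disjoint X.1 X.2 →
    X.1.card + X.2.card = d → h X = 2 * g X

/-- The local `D_d`-submodular inequalities (i)–(iii) for the pair `(f, g)`. -/
def IsDisubmodular (f g : Finset (Fin d) × Finset (Fin d) → ℝ) : Prop :=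
  (∀ X : Finset (Fin d) × Finset (Fin d), Disjoint X.1 X.2 →
      (X.1.card + X.2.card : ℤ) ≤ (d : ℤ) - 4 →
      ∀ a b : Fin d, ∀ εa εb : Bool, a ∉ X.1 ∪ X.2 → b ∉ X.1 ∪ X.2 → a ≠ b →
        f (adjS X a εa) + f (adjS X b εb) ≥ f X + f (adjS (adjS X a εa) b εb)) ∧
    (∀ X : Finset (Fin d) × Finset (Fin d), Disjoint X.1 X.2 →
      X.1.card + X.2.card = d - 3 →
      ∀ a b c : Fin d, ∀ εa εb εc : Bool,
        a ∉ X.1 ∪ X.2 → b ∉ X.1 ∪ X.2 → c ∉ X.1 ∪ X.2 →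
        a ≠ b → a ≠ c → b ≠ c →
        f (adjS X a εa) + f (adjS X b εb) ≥ f X +
          g (adjS (adjS (adjS X a εa) b εb) c εc) +
          g (adjS (adjS (adjS X a εa) b εb) c (!εc))) ∧
    (∀ X : Finset (Fin d) × Finset (Fin d), Disjoint X.1 X.2 →
      X.1.card + X.2.card = d - 2 →
      ∀ a b : Fin d, ∀ εa εb : Bool, a ∉ X.1 ∪ X.2 → b ∉ X.1 ∪ X.2 → a ≠ b →
        g (adjS (adjS X a εa) b εb) + g (adjS (adjS X a (!εa)) b (!εb)) ≥ f X)

theorem IsTypeDExtension.isSquareSubmodular (H : IsTypeDExtension f g h)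
    (hfg : IsDisubmodular f g) : IsSquareSubmodular h := by
  obtain ⟨hi, hii, hiii⟩ := hfg
  intro X hX a b εa εb ha hb hab
  have hbXa : b ∉ (adjS X a εa).1 ∪ (adjS X a εa).2 := notMem_adjS_iff.2 ⟨hab.symm, hb⟩
  have haXb : a ∉ (adjS X b εb).1 ∪ (adjS X b εb).2 := notMem_adjS_iff.2 ⟨hab, ha⟩
  have hXa := disjoint_adjS (ε := εa) hX ha
  have hXb := disjoint_adjS (ε := εb) hX hb
  have hXab := disjoint_adjS (ε := εb) hXa hbXa
  have := card_adjS (ε := εa) ha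
  have := card_adjS (ε := εb) hb
  have := card_adjS (ε := εb) hbXa
  have := card_add_one_le hXa hbXa
  rw [H.eq_low X hX (by omega)]
  rcases (by omega : X.1.card + X.2.card + 4 ≤ d ∨ X.1.card + X.2.card + 3 = d ∨
    X.1.card + X.2.card + 2 = d) with hs | hs | hs
  · rw [H.eq_low _ hXa (by omega), H.eq_low _ hXb (by omega), H.eq_low _ hXab (by omega)]
    exact hi X hX (by omega) a b εa εb ha hb hab
  · obtain ⟨c, hc⟩ := exists_notMem hXab (by omega)
    obtain ⟨hcb, hcXa⟩ := notMem_adjS_iff.1 hc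
    obtain ⟨hca, hcX⟩ := notMem_adjS_iff.1 hcXa
    rw [H.eq_low _ hXa (by omega), H.eq_low _ hXb (by omega), H.eq_mid _ hXab (by omega) c hc]
    have := hii X hX (by omega) a b c εa εb true ha hb hcX hab hca.symm hcb.symm
    rw [Bool.not_true] at this
    linarith
  · rw [H.eq_mid _ hXa (by omega) b hbXa, H.eq_mid _ hXb (by omega) a haXb,
      H.eq_top _ hXab (by omega), adjS_comm X b a, adjS_comm X b a]
    have := hiii X hX (by omega) a b εa (!εb) ha hb hab
    cases εa <;> cases εb <;> simp only [Bool.not_true, Bool.not_false] at this ⊢ <;> linarith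

theorem IsTypeDExtension.isBisubmodular (H : IsTypeDExtension f g h)
    (hfg : IsDisubmodular f g) : IsBisubmodular h := by
  have hsq := H.isSquareSubmodular hfg
  have hopp : IsOppositeSubmodular h := hsq.isOppositeSubmodular fun X hX hs a ha => by
    rw [H.eq_top _ (disjoint_adjS hX ha) (by rw [card_adjS ha]; omega),
      H.eq_top _ (disjoint_adjS hX ha) (by rw [card_adjS ha]; omega),
      H.eq_mid X hX (by omega) a ha]
    linarith
  exact fun X Y hX hY => hsq.bisubmodular hopp hX hY

theorem IsTypeDExtension.isDisubmodular (H : IsTypeDExtension f g h)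
    (hbi : IsBisubmodular h) : IsDisubmodular f g := by
  refine ⟨fun X hX hs a b εa εb ha hb hab => ?_,
    fun X hX hs a b c εa εb εc ha hb hc hab hac hbc => ?_,
    fun X hX hs a b εa εb ha hb hab => ?_⟩
  all_goals
    have hbXa : b ∉ (adjS X a εa).1 ∪ (adjS X a εa).2 := notMem_adjS_iff.2 ⟨hab.symm, hb⟩
    have hXa := disjoint_adjS (ε := εa) hX ha
    have := card_adjS (ε := εa) ha
    have := card_adjS (ε := εb) hb
    have := card_adjS (ε := εb) hbXa
    have := card_add_one_le hXa hbXa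
  · have := hbi.isSquareSubmodular X hX a b εa εb ha hb hab
    rwa [H.eq_low X hX (by omega), H.eq_low _ hXa (by omega),
      H.eq_low _ (disjoint_adjS hX hb) (by omega),
      H.eq_low _ (disjoint_adjS hXa hbXa) (by omega)] at this
  · have hcXab : c ∉ (adjS (adjS X a εa) b εb).1 ∪ (adjS (adjS X a εa) b εb).2 :=
      notMem_adjS_iff.2 ⟨hbc.symm, notMem_adjS_iff.2 ⟨hac.symm, hc⟩⟩
    have := card_add_one_le (disjoint_adjS hXa hbXa) hcXab
    have := hbi.isSquareSubmodular X hX a b εa εb ha hb hab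
    rw [H.eq_low X hX (by omega), H.eq_low _ hXa (by omega),
      H.eq_low _ (disjoint_adjS hX hb) (by omega),
      H.eq_mid _ (disjoint_adjS hXa hbXa) (by omega) c hcXab] at this
    cases εc <;> simp only [Bool.not_true, Bool.not_false] <;> linarith
  · have hXa' := disjoint_adjS (ε := !εa) hX ha
    have hbXa' : b ∉ (adjS X a (!εa)).1 ∪ (adjS X a (!εa)).2 := notMem_adjS_iff.2 ⟨hab.symm, hb⟩
    have := card_adjS (ε := !εb) hbXa'
    have := card_adjS (ε := !εa) ha
    have := hbi.antipodal hX ha hb hab εa εb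
    rw [H.eq_top _ (disjoint_adjS hXa hbXa) (by omega),
      H.eq_top _ (disjoint_adjS hXa' hbXa') (by omega), H.eq_low X hX (by omega)] at this
    linarith

end TypeD

end SignedSubset

open SignedSubset

theorem disubmodular_iff_bisubmodular_general
    (d : ℕ)
    (f g h : Finset (Fin d) × Finset (Fin d) → ℝ)
    (hle : ∀ X : Finset (Fin d) × Finset (Fin d), Disjoint X.1 X.2 →
      (X.1.card + X.2.card : ℤ) ≤ (d : ℤ) - 2 → h X = f X)
    (hmid : ∀ X : Finset (Fin d) × Finset (Fin d), Disjoint X.1 X.2 →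
      X.1.card + X.2.card = d - 1 → ∀ a : Fin d, a ∉ X.1 ∪ X.2 →
        h X = g (adjS X a true) + g (adjS X a false))
    (htop : ∀ X : Finset (Fin d) × Finset (Fin d), Disjoint X.1 X.2 →
      X.1.card + X.2.card = d → h X = 2 * g X) :
    ((∀ X : Finset (Fin d) × Finset (Fin d), Disjoint X.1 X.2 →
        (X.1.card + X.2.card : ℤ) ≤ (d : ℤ) - 4 →
        ∀ a b : Fin d, ∀ εa εb : Bool, a ∉ X.1 ∪ X.2 → b ∉ X.1 ∪ X.2 → a ≠ b →
          f (adjS X a εa) + f (adjS X b εb) ≥ f X + f (adjS (adjS X a εa) b εb)) ∧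
      (∀ X : Finset (Fin d) × Finset (Fin d), Disjoint X.1 X.2 →
        X.1.card + X.2.card = d - 3 →
        ∀ a b c : Fin d, ∀ εa εb εc : Bool,
          a ∉ X.1 ∪ X.2 → b ∉ X.1 ∪ X.2 → c ∉ X.1 ∪ X.2 →
          a ≠ b → a ≠ c → b ≠ c →
          f (adjS X a εa) + f (adjS X b εb) ≥ f X +
            g (adjS (adjS (adjS X a εa) b εb) c εc) +
            g (adjS (adjS (adjS X a εa) b εb) c (!εc))) ∧
      (∀ X : Finset (Fin d) × Finset (Fin d), Disjoint X.1 X.2 →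
        X.1.card + X.2.card = d - 2 →
        ∀ a b : Fin d, ∀ εa εb : Bool, a ∉ X.1 ∪ X.2 → b ∉ X.1 ∪ X.2 → a ≠ b →
          g (adjS (adjS X a εa) b εb) + g (adjS (adjS X a (!εa)) b (!εb)) ≥ f X)) ↔
    (∀ X Y : Finset (Fin d) × Finset (Fin d), Disjoint X.1 X.2 → Disjoint Y.1 Y.2 →
      h X + h Y ≥ h (X.1 ∩ Y.1, X.2 ∩ Y.2) +
        h ((X.1 ∪ Y.1) \ (X.2 ∪ Y.2), (X.2 ∪ Y.2) \ (X.1 ∪ Y.1))) := by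
  have H : IsTypeDExtension f g h := ⟨hle, hmid, htop⟩
  exact ⟨H.isBisubmodular, H.isDisubmodular⟩

/-- **Type D claim of Section 5.2 (disubmodularity equals bisubmodularity of `h`)**: with `f`
defined on signed subsets of size `≤ d−2` (with `f(∅) = 0`), `g` defined on signed subsets of
size `d`, and `h` the induced function on all signed subsets (`h = f` on sizes `≤ d−2`;
`h(X) = g(Xa) + g(X(−a))` for `|X| = d−1` with `a` the missing index; `h = 2g` on size `d`),
the pair `(f, g)` satisfies the local `D_d`-submodular inequalities if and only if `h` is
bisubmodular. -/
theorem disubmodular_iff_bisubmodular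
    (d : ℕ) (hd : 4 ≤ d)
    (f g h : Finset (Fin d) × Finset (Fin d) → ℝ)
    (hf0 : f (∅, ∅) = 0)
    (hle : ∀ X : Finset (Fin d) × Finset (Fin d), Disjoint X.1 X.2 →
      (X.1.card + X.2.card : ℤ) ≤ (d : ℤ) - 2 → h X = f X)
    (hmid : ∀ X : Finset (Fin d) × Finset (Fin d), Disjoint X.1 X.2 →
      X.1.card + X.2.card = d - 1 → ∀ a : Fin d, a ∉ X.1 ∪ X.2 →
        h X = g (adjS X a true) + g (adjS X a false))
    (htop : ∀ X : Finset (Fin d) × Finset (Fin d), Disjoint X.1 X.2 →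
      X.1.card + X.2.card = d → h X = 2 * g X) :
    ((∀ X : Finset (Fin d) × Finset (Fin d), Disjoint X.1 X.2 →
        (X.1.card + X.2.card : ℤ) ≤ (d : ℤ) - 4 →
        ∀ a b : Fin d, ∀ εa εb : Bool, a ∉ X.1 ∪ X.2 → b ∉ X.1 ∪ X.2 → a ≠ b →
          f (adjS X a εa) + f (adjS X b εb) ≥ f X + f (adjS (adjS X a εa) b εb)) ∧
      (∀ X : Finset (Fin d) × Finset (Fin d), Disjoint X.1 X.2 →
        X.1.card + X.2.card = d - 3 →
        ∀ a b c : Fin d, ∀ εa εb εc : Bool,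
          a ∉ X.1 ∪ X.2 → b ∉ X.1 ∪ X.2 → c ∉ X.1 ∪ X.2 →
          a ≠ b → a ≠ c → b ≠ c →
          f (adjS X a εa) + f (adjS X b εb) ≥ f X +
            g (adjS (adjS (adjS X a εa) b εb) c εc) +
            g (adjS (adjS (adjS X a εa) b εb) c (!εc))) ∧
      (∀ X : Finset (Fin d) × Finset (Fin d), Disjoint X.1 X.2 →
        X.1.card + X.2.card = d - 2 →
        ∀ a b : Fin d, ∀ εa εb : Bool, a ∉ X.1 ∪ X.2 → b ∉ X.1 ∪ X.2 → a ≠ b →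
          g (adjS (adjS X a εa) b εb) + g (adjS (adjS X a (!εa)) b (!εb)) ≥ f X)) ↔
    (∀ X Y : Finset (Fin d) × Finset (Fin d), Disjoint X.1 X.2 → Disjoint Y.1 Y.2 →
      h X + h Y ≥ h (X.1 ∩ Y.1, X.2 ∩ Y.2) +
        h ((X.1 ∪ Y.1) \ (X.2 ∪ Y.2), (X.2 ∪ Y.2) \ (X.1 ∪ Y.1))) :=
  disubmodular_iff_bisubmodular_general d f g h hle hmid htop
end

section
/- (From the proof of Theorem 8.4: decomposability of P_{C_d}(λ_{d−1})) For every d ≥ 2, the following Minkowski sum identity holds in ℝ^d: conv({v ∈ {−1,0,1}^d : exactly one coordinate of v equals 0}) = conv({v ∈ {−1/2, 1/2}^d : the number of coordinates of v equal to −1/2 is even}) + conv({v ∈ {−1/2, 1/2}^d : the number of coordinates of v equal to −1/2 is odd}). In particular, the weight polytope of e_1 + ⋯ + e_{d−1} under the group of all signed permutations of coordinates is the Minkowski sum of the two half-cube weight polytopes of type D_d, hence is decomposable. -/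
open scoped Pointwise symmDiff
open Finset Function

/-!
Write `C` for the vectors with entries in `{-1, 0, 1}` and exactly one zero, and `A`, `B` for the
`±1/2`-vectors with an even, respectively odd, number of entries `-1/2`.

`C ⊆ A + B`: if `v ∈ C` has its zero at `i₀`, the two vectors obtained from `v / 2` by putting
`±1/2` at `i₀` sum to `v`, and their numbers of entries `-1/2` differ by one, so one lies in `A`
and the other in `B`.

`A + B ⊆ conv C`: for `a ∈ A`, `b ∈ B` the vector `a + b` has entries in `{-1, 0, 1}`, and its
zeros are the symmetric difference of the `-1/2`-positions of `a` and `b`, so there is an odd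
number of them. Any such vector with at least three zeros at `i ≠ j` is the midpoint of the two
vectors obtained by putting `1, -1`, respectively `-1, 1`, at `i, j`, each having two zeros less.
-/

namespace Finset

variable {α : Type*} [DecidableEq α]

theorem even_card_symmDiff_iff (s t : Finset α) : Even #(s ∆ t) ↔ (Even #s ↔ Even #t) := by
  have hsub : s ∩ t ⊆ s ∪ t := inter_subset_union
  have hunion := card_union_add_card_inter s t
  have hle := card_le_card hsub
  rw [symmDiff_eq_sup_sdiff_inf, sup_eq_union, inf_eq_inter, card_sdiff_of_subset hsub]
  simp only [Nat.even_iff]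
  omega

variable {ι : Type*} [Fintype ι] [DecidableEq ι] {β : Type*} [DecidableEq β]

theorem filter_update_eq_of_ne (f : ι → β) (a : ι) {b c : β} (h : b ≠ c) :
    ({i | update f a b i = c} : Finset ι) = ({i | f i = c} : Finset ι).erase a := by
  ext i
  by_cases hi : i = a
  · subst hi; simp [h]
  · simp [hi]

theorem filter_update_eq_self (f : ι → β) (a : ι) (c : β) :
    ({i | update f a c i = c} : Finset ι) = insert a ({i | f i = c} : Finset ι) := by
  ext i
  by_cases hi : i = a
  · subst hi; simp
  · simp [hi]

end Finset

section Polytopes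

variable (ι : Type*) [Fintype ι]

/-- The orbit of `e_1 + ⋯ + e_{d-1}` under signed permutations. -/
def signVectorsWithOneZero : Set (ι → ℝ) :=
  {v | (∀ i, v i = -1 ∨ v i = 0 ∨ v i = 1) ∧ #{i | v i = 0} = 1}

/-- For `P = Even` (resp. `Odd`) the orbit of `(e_1 + ⋯ + e_d) / 2` (resp. of
`(e_1 + ⋯ + e_{d-1} - e_d) / 2`) under even signed permutations. -/
def halfCubeVertices (P : ℕ → Prop) : Set (ι → ℝ) :=
  {v | (∀ i, v i = -(1/2) ∨ v i = 1/2) ∧ P #{i | v i = -(1/2)}}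

end Polytopes

section Decomposition

variable {ι : Type*} [Fintype ι] [DecidableEq ι]

theorem signVectorsWithOneZero_subset_add :
    signVectorsWithOneZero ι ⊆ halfCubeVertices ι Even + halfCubeVertices ι Odd := by
  rintro v ⟨hv, hzero⟩
  obtain ⟨i₀, hi₀⟩ := card_eq_one.mp hzero
  have hvi₀ : v i₀ = 0 := by simpa using hi₀.ge (mem_singleton_self i₀)
  have hv_ne : ∀ j ≠ i₀, v j = -1 ∨ v j = 1 := fun j hj => by
    have : v j ≠ 0 := fun h => hj (mem_singleton.mp (hi₀ ▸ by simpa using h))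
    simpa [this] using hv j
  set u : ι → ℝ := (1/2 : ℝ) • v
  set S : Finset ι := {i | u i = -(1/2)}
  have hi₀S : i₀ ∉ S := by simp [S, u, hvi₀]
  have hplus : update u i₀ (1/2) ∈ halfCubeVertices ι (· = #S) := by
    refine ⟨(forall_update_iff u fun _ x => x = -(1/2) ∨ x = 1/2).2 ⟨by norm_num, ?_⟩, ?_⟩
    · intro j hj
      rcases hv_ne j hj with h | h <;> simp [u, h]
    · rw [filter_update_eq_of_ne _ _ (by norm_num), erase_eq_of_notMem hi₀S]
  have hminus : update u i₀ (-(1/2)) ∈ halfCubeVertices ι (· = #S + 1) := by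
    refine ⟨(forall_update_iff u fun _ x => x = -(1/2) ∨ x = 1/2).2 ⟨by norm_num, ?_⟩, ?_⟩
    · exact fun j hj => hplus.1 j |>.imp (by simp [hj]) (by simp [hj])
    · rw [filter_update_eq_self, card_insert_of_notMem hi₀S]
  have hsum : update u i₀ (1/2) + update u i₀ (-(1/2)) = v := by
    ext j
    by_cases hj : j = i₀
    · subst hj; simp [hvi₀]
    · simp [hj, u]; ring
  rcases Nat.even_or_odd #S with hS | hS
  · exact ⟨_, ⟨hplus.1, hplus.2 ▸ hS⟩, _, ⟨hminus.1, hminus.2 ▸ hS.add_one⟩, hsum⟩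
  · exact ⟨_, ⟨hminus.1, hminus.2 ▸ hS.add_one⟩, _, ⟨hplus.1, hplus.2 ▸ hS⟩,
      (add_comm _ _).trans hsum⟩

theorem mem_convexHull_signVectorsWithOneZero_of_card_eq (n : ℕ) {v : ι → ℝ}
    (hv : ∀ i, v i = -1 ∨ v i = 0 ∨ v i = 1) (hcard : #{i | v i = 0} = 2 * n + 1) :
    v ∈ convexHull ℝ (signVectorsWithOneZero ι) := by
  induction n generalizing v with
  | zero => exact subset_convexHull ℝ _ ⟨hv, hcard⟩
  | succ n ih =>
    obtain ⟨i, hi, j, hj, hij⟩ := one_lt_card.mp (show 1 < #{i | v i = 0} by omega)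
    rw [mem_filter] at hi hj
    have hji : j ≠ i := Ne.symm hij
    have hcard' : #(({i | v i = 0} : Finset ι).erase i |>.erase j) = 2 * n + 1 := by
      rw [card_erase_of_mem (by simp [hj.2, hji]), card_erase_of_mem (by simp [hi.2]), hcard]
      omega
    have hmem : ∀ s : ℝ, (s = -1 ∨ s = 1) →
        update (update v i s) j (-s) ∈ convexHull ℝ (signVectorsWithOneZero ι) := by
      intro s hs
      have hs0 : s ≠ 0 := by rcases hs with rfl | rfl <;> norm_num
      refine ih (fun k => ?_) ?_
      · by_cases hkj : k = j
        · subst hkj; rcases hs with rfl | rfl <;> simp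
        by_cases hki : k = i
        · subst hki; rcases hs with rfl | rfl <;> simp [hkj]
        · simpa [hkj, hki] using hv k
      · rwa [filter_update_eq_of_ne _ _ (neg_ne_zero.mpr hs0),
          filter_update_eq_of_ne _ _ hs0]
    have hmid : (1/2 : ℝ) • update (update v i 1) j (-1) +
        (1/2 : ℝ) • update (update v i (-1)) j (-(-1)) = v := by
      ext k
      by_cases hkj : k = j
      · subst hkj; simp [hj.2]
      by_cases hki : k = i
      · subst hki; simp [hkj, hi.2]
      · simp [hkj, hki]; ring
    rw [← hmid]
    exact convex_convexHull ℝ _ (hmem 1 (by norm_num)) (hmem (-1) (by norm_num))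
      (by norm_num) (by norm_num) (by norm_num)

theorem filter_add_eq_zero_eq_symmDiff {a b : ι → ℝ} (ha : ∀ i, a i = -(1/2) ∨ a i = 1/2)
    (hb : ∀ i, b i = -(1/2) ∨ b i = 1/2) :
    ({i | (a + b) i = 0} : Finset ι) =
      ({i | a i = -(1/2)} : Finset ι) ∆ ({i | b i = -(1/2)} : Finset ι) := by
  ext i
  rw [mem_symmDiff]
  rcases ha i with h | h <;> rcases hb i with h' | h' <;> simp [h, h'] <;> norm_num

theorem halfCubeVertices_add_subset_convexHull :
    halfCubeVertices ι Even + halfCubeVertices ι Odd ⊆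
      convexHull ℝ (signVectorsWithOneZero ι) := by
  rintro _ ⟨a, ⟨ha, ha_even⟩, b, ⟨hb, hb_odd⟩, rfl⟩
  have hsign : ∀ i, (a + b) i = -1 ∨ (a + b) i = 0 ∨ (a + b) i = 1 := fun i => by
    rcases ha i with h | h <;> rcases hb i with h' | h' <;> simp [h, h'] <;> norm_num
  have hodd : Odd #{i | (a + b) i = 0} := by
    rw [filter_add_eq_zero_eq_symmDiff ha hb, ← Nat.not_even_iff_odd, even_card_symmDiff_iff]
    exact fun h => Nat.not_even_iff_odd.mpr hb_odd (h.mp ha_even)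
  obtain ⟨n, hn⟩ := hodd
  exact mem_convexHull_signVectorsWithOneZero_of_card_eq n hsign hn

theorem convexHull_signVectorsWithOneZero :
    convexHull ℝ (signVectorsWithOneZero ι) =
      convexHull ℝ (halfCubeVertices ι Even) + convexHull ℝ (halfCubeVertices ι Odd) := by
  rw [← convexHull_add]
  exact le_antisymm (convexHull_mono signVectorsWithOneZero_subset_add)
    (convexHull_min halfCubeVertices_add_subset_convexHull (convex_convexHull ℝ _))

end Decomposition

theorem Cd_fundamental_weight_polytope_decomposes_general
    (d : ℕ) :
    convexHull ℝ {v : Fin d → ℝ | (∀ i, v i = -1 ∨ v i = 0 ∨ v i = 1) ∧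
        (Finset.univ.filter fun i => v i = 0).card = 1} =
      convexHull ℝ {v : Fin d → ℝ | (∀ i, v i = -(1/2) ∨ v i = 1/2) ∧
          Even (Finset.univ.filter fun i => v i = -(1/2)).card} +
        convexHull ℝ {v : Fin d → ℝ | (∀ i, v i = -(1/2) ∨ v i = 1/2) ∧
          Odd (Finset.univ.filter fun i => v i = -(1/2)).card} :=
  convexHull_signVectorsWithOneZero

/-- **Decomposability of `P_{C_d}(λ_{d−1})`** (from the proof of Theorem 8.4): in `ℝ^d`, the
convex hull of the signed-permutation orbit of `e_1 + ⋯ + e_{d−1}` (the vectors with exactly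
one zero coordinate and all other coordinates `±1`) is the Minkowski sum of the two type `D_d`
half-cube weight polytopes (convex hulls of the `±1/2`-vectors with an even, respectively odd,
number of coordinates equal to `−1/2`). -/
theorem Cd_fundamental_weight_polytope_decomposes
    (d : ℕ) (hd : 2 ≤ d) :
    convexHull ℝ {v : Fin d → ℝ | (∀ i, v i = -1 ∨ v i = 0 ∨ v i = 1) ∧
        (Finset.univ.filter fun i => v i = 0).card = 1} =
      convexHull ℝ {v : Fin d → ℝ | (∀ i, v i = -(1/2) ∨ v i = 1/2) ∧
          Even (Finset.univ.filter fun i => v i = -(1/2)).card} +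
        convexHull ℝ {v : Fin d → ℝ | (∀ i, v i = -(1/2) ∨ v i = 1/2) ∧
          Odd (Finset.univ.filter fun i => v i = -(1/2)).card} :=
  Cd_fundamental_weight_polytope_decomposes_general d
end

section
/- (Type A facet property, instance of Theorem 7.1) Let n ≥ 2. For every S ⊆ [n] and distinct a, b ∈ [n] ∖ S, there exists a submodular function f : 2^{[n]} → ℝ (i.e., f(S' ∪ {a'}) + f(S' ∪ {b'}) ≥ f(S') + f(S' ∪ {a',b'}) for all S' ⊆ [n] and distinct a', b' ∈ [n] ∖ S') such that f(S ∪ {a}) + f(S ∪ {b}) = f(S) + f(S ∪ {a,b}), while f(S' ∪ {a'}) + f(S' ∪ {b'}) > f(S') + f(S' ∪ {a',b'}) for every triple (S', {a',b'}) ≠ (S, {a,b}). In particular, each local submodular inequality defines a facet of the submodular cone in ℝ^{2^{[n]}}. -/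
/-! The witness is `f T = -#T ^ 2 + [a, b ∈ T] (4 - #(S ∆ T))`. The quadratic term has second
difference `2` in every direction. The correction vanishes off the supersets of `{a, b}` and is
modular on them, so its second difference is `0` or `±1` in every direction except `{a, b}`, where
it is `#(S ∆ T) - 2`; this vanishes exactly at `T = S`. -/

open Finset
open scoped symmDiff

variable {α : Type*} [DecidableEq α]

theorem Finset.card_symmDiff_insert_of_notMem {S T : Finset α} {x : α} (hx : x ∉ T) :
    (#(S ∆ insert x T) : ℝ) = #(S ∆ T) + if x ∈ S then -1 else 1 := by
  by_cases hxS : x ∈ S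
  · have hmem : x ∈ S ∆ T := by simp [mem_symmDiff, hxS, hx]
    have : S ∆ insert x T = (S ∆ T).erase x := by
      ext z; simp only [mem_symmDiff, mem_insert, mem_erase]; grind
    rw [this, card_erase_of_mem hmem, if_pos hxS, Nat.cast_sub (card_pos.2 ⟨x, hmem⟩)]
    ring
  · have hmem : x ∉ S ∆ T := by simp [mem_symmDiff, hxS, hx]
    have : S ∆ insert x T = insert x (S ∆ T) := by
      ext z; simp only [mem_symmDiff, mem_insert]; grind
    rw [this, card_insert_of_notMem hmem, if_neg hxS]
    push_cast; ring

def submodularDefect (f : Finset α → ℝ) (T : Finset α) (x y : α) : ℝ :=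
  f (insert x T) + f (insert y T) - (f T + f (insert x (insert y T)))

theorem submodularDefect_comm (f : Finset α → ℝ) (T : Finset α) (x y : α) :
    submodularDefect f T x y = submodularDefect f T y x := by
  rw [submodularDefect, submodularDefect, insert_comm]; ring

theorem submodularDefect_add (f g : Finset α → ℝ) (T : Finset α) (x y : α) :
    submodularDefect (f + g) T x y = submodularDefect f T x y + submodularDefect g T x y := by
  simp only [submodularDefect, Pi.add_apply]; ring

theorem submodularDefect_neg_card_sq {T : Finset α} {x y : α} (hx : x ∉ T) (hy : y ∉ T)
    (hxy : x ≠ y) : submodularDefect (fun U => -(#U : ℝ) ^ 2) T x y = 2 := by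
  have hxy' : x ∉ insert y T := by simp [hxy, hx]
  simp only [submodularDefect, card_insert_of_notMem hx, card_insert_of_notMem hy,
    card_insert_of_notMem hxy']
  push_cast; ring

noncomputable def pairCorrection (S : Finset α) (a b : α) (T : Finset α) : ℝ :=
  if a ∈ T ∧ b ∈ T then 4 - #(S ∆ T) else 0

theorem submodularDefect_pairCorrection_self {S T : Finset α} {a b : α} (ha : a ∉ S)
    (hb : b ∉ S) (haT : a ∉ T) (hbT : b ∉ T) (hab : a ≠ b) :
    submodularDefect (pairCorrection S a b) T a b = #(S ∆ T) - 2 := by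
  have haT' : a ∉ insert b T := by simp [hab, haT]
  simp only [submodularDefect, pairCorrection, card_symmDiff_insert_of_notMem haT',
    card_symmDiff_insert_of_notMem hbT, if_neg ha, if_neg hb]
  simp only [mem_insert, haT, hbT, hab, hab.symm, or_false, or_true, or_self, and_false, and_true,
    and_self, ↓reduceIte, add_zero, zero_add, zero_sub, neg_sub]
  ring

theorem neg_one_le_submodularDefect_pairCorrection {S T : Finset α} {a b x y : α} (hx : x ∉ T)
    (hy : y ∉ T) (hxy : x ≠ y) (hne : ({x, y} : Finset α) ≠ {a, b}) :
    -1 ≤ submodularDefect (pairCorrection S a b) T x y := by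
  have hxy' : x ∉ insert y T := by simp [hxy, hx]
  have hpair : ¬((x = a ∧ y = b) ∨ (x = b ∧ y = a)) := by
    rintro (⟨rfl, rfl⟩ | ⟨rfl, rfl⟩)
    · exact hne rfl
    · exact hne (pair_comm _ _)
  unfold submodularDefect pairCorrection
  rw [card_symmDiff_insert_of_notMem hxy', card_symmDiff_insert_of_notMem hy,
    card_symmDiff_insert_of_notMem hx]
  simp only [mem_insert] at *
  -- Every membership pattern but the one `hpair` excludes gives 0 or one ±1 step of `#(S ∆ ·)`.
  split_ifs <;> grind

noncomputable def facetWitness (S : Finset α) (a b : α) : Finset α → ℝ :=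
  (fun U => -(#U : ℝ) ^ 2) + pairCorrection S a b

theorem submodularDefect_facetWitness_of_pair_eq {S T : Finset α} {a b x y : α} (ha : a ∉ S)
    (hb : b ∉ S) (hx : x ∉ T) (hy : y ∉ T) (hxy : x ≠ y) (hp : ({x, y} : Finset α) = {a, b}) :
    submodularDefect (facetWitness S a b) T x y = #(S ∆ T) := by
  have hxab : x ∈ ({a, b} : Finset α) := hp ▸ mem_insert_self x {y}
  have hyab : y ∈ ({a, b} : Finset α) := hp ▸ mem_insert_of_mem (mem_singleton_self y)
  rw [facetWitness, submodularDefect_add, submodularDefect_neg_card_sq hx hy hxy]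
  simp only [mem_insert, mem_singleton] at hxab hyab
  rcases hxab with rfl | rfl <;> rcases hyab with rfl | rfl
  · exact absurd rfl hxy
  · rw [submodularDefect_pairCorrection_self ha hb hx hy hxy]; ring
  · rw [submodularDefect_comm, submodularDefect_pairCorrection_self ha hb hy hx hxy.symm]; ring
  · exact absurd rfl hxy

theorem one_le_submodularDefect_facetWitness {S T : Finset α} {a b x y : α} (hx : x ∉ T)
    (hy : y ∉ T) (hxy : x ≠ y) (hne : ({x, y} : Finset α) ≠ {a, b}) :
    1 ≤ submodularDefect (facetWitness S a b) T x y := by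
  rw [facetWitness, submodularDefect_add, submodularDefect_neg_card_sq hx hy hxy]
  linarith [neg_one_le_submodularDefect_pairCorrection (S := S) hx hy hxy hne]

theorem local_submodular_inequality_is_facet_general
    (n : ℕ) (S : Finset (Fin n)) (a b : Fin n)
    (ha : a ∉ S) (hb : b ∉ S) (hab : a ≠ b) :
    ∃ f : Finset (Fin n) → ℝ,
      (∀ S' : Finset (Fin n), ∀ a' b' : Fin n, a' ∉ S' → b' ∉ S' → a' ≠ b' →
        f (insert a' S') + f (insert b' S') ≥ f S' + f (insert a' (insert b' S'))) ∧
      (f (insert a S) + f (insert b S) = f S + f (insert a (insert b S))) ∧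
      (∀ S' : Finset (Fin n), ∀ a' b' : Fin n, a' ∉ S' → b' ∉ S' → a' ≠ b' →
        ¬(S' = S ∧ ({a', b'} : Finset (Fin n)) = ({a, b} : Finset (Fin n))) →
        f (insert a' S') + f (insert b' S') > f S' + f (insert a' (insert b' S'))) := by
  refine ⟨facetWitness S a b, fun T x y hx hy hxy => ?_, ?_, fun T x y hx hy hxy hne => ?_⟩
  · apply sub_nonneg.mp
    change 0 ≤ submodularDefect _ T x y
    by_cases hp : ({x, y} : Finset (Fin n)) = {a, b}
    · rw [submodularDefect_facetWitness_of_pair_eq ha hb hx hy hxy hp]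
      positivity
    · linarith [one_le_submodularDefect_facetWitness (S := S) hx hy hxy hp]
  · apply sub_eq_zero.mp
    change submodularDefect _ S a b = 0
    simpa using submodularDefect_facetWitness_of_pair_eq ha hb ha hb hab rfl
  · apply sub_pos.mp
    change 0 < submodularDefect _ T x y
    by_cases hp : ({x, y} : Finset (Fin n)) = {a, b}
    · have hTS : T ≠ S := fun h => hne ⟨h, hp⟩
      rw [submodularDefect_facetWitness_of_pair_eq ha hb hx hy hxy hp]
      exact_mod_cast card_pos.2 (nonempty_iff_ne_empty.2 (by simpa using hTS.symm))
    · linarith [one_le_submodularDefect_facetWitness (S := S) hx hy hxy hp]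

/-- **Type A facet property (instance of Theorem 7.1)**: for every `S ⊆ [n]` and distinct
`a, b ∈ [n] ∖ S` there is a submodular function `f` satisfying the local submodular inequality
indexed by `(S, {a,b})` with equality, and every other local submodular inequality strictly.
Hence every local submodular inequality defines a facet of the submodular cone. -/
theorem local_submodular_inequality_is_facet
    (n : ℕ) (hn : 2 ≤ n) (S : Finset (Fin n)) (a b : Fin n)
    (ha : a ∉ S) (hb : b ∉ S) (hab : a ≠ b) :
    ∃ f : Finset (Fin n) → ℝ,
      (∀ S' : Finset (Fin n), ∀ a' b' : Fin n, a' ∉ S' → b' ∉ S' → a' ≠ b' →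
        f (insert a' S') + f (insert b' S') ≥ f S' + f (insert a' (insert b' S'))) ∧
      (f (insert a S) + f (insert b S) = f S + f (insert a (insert b S))) ∧
      (∀ S' : Finset (Fin n), ∀ a' b' : Fin n, a' ∉ S' → b' ∉ S' → a' ≠ b' →
        ¬(S' = S ∧ ({a', b'} : Finset (Fin n)) = ({a, b} : Finset (Fin n))) →
        f (insert a' S') + f (insert b' S') > f S' + f (insert a' (insert b' S'))) :=
  local_submodular_inequality_is_facet_general n S a b ha hb hab
end
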